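/- arXiv:2009.11494 — 7 statements merged into one kernel-verified Lean document; each statement's English description precedes it below -/
import Mathlib

section
/- Lemma 2.10: Let θ_X and θ_Y be fully invariant congruences on F = FreeMonoid ℕ each of which contains (x^k, x^{k+1}) for some k ≥ 1 (the corresponding varieties X and Y are aperiodic). If (x^n, x^m) ∈ θ_X ⊔ θ_Y for some 1 ≤ n < m (i.e. the meet X ∧ Y satisfies the non-trivial identity x^n ≈ x^m), then (x^n, x^m) ∈ θ_X or (x^n, x^m) ∈ θ_Y. -/
/-! Common definitions: words, fully invariant congruences, identities and
named varieties from the paper. -/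

/-- The free monoid over the countably infinite alphabet `ℕ`. -/
abbrev FM : Type := FreeMonoid ℕ

/-- The letters `x, y, z, s, t, h` (pairwise distinct elements of `ℕ`). -/
def xL : FM := FreeMonoid.of 0
def yL : FM := FreeMonoid.of 1
def zL : FM := FreeMonoid.of 2
def sL : FM := FreeMonoid.of 3
def tL : FM := FreeMonoid.of 4
def hL : FM := FreeMonoid.of 5
/-- The indexed letters `z_i` and `t_i` (0-based; pairwise distinct, and distinct
from the named letters above). -/
def zV (i : ℕ) : FM := FreeMonoid.of (10 + 2 * i)
def tV (i : ℕ) : FM := FreeMonoid.of (11 + 2 * i)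

/-- A congruence on the free monoid is fully invariant if it is stable under all
monoid endomorphisms. -/
def IsFullyInvariant (θ : Con FM) : Prop :=
  ∀ (σ : FM →* FM) (u v : FM), θ u v → θ (σ u) (σ v)

/-- The smallest fully invariant congruence on `FM` containing a set of identities. -/
def fiCon (E : Set (FM × FM)) : Con FM :=
  sInf {c : Con FM | IsFullyInvariant c ∧ ∀ p ∈ E, c p.1 p.2}

/-- Two congruences (relations) permute: `α ∘ β = β ∘ α`. -/
def Permute (α β : Con FM) : Prop :=
  Relation.Comp (⇑α) (⇑β) = Relation.Comp (⇑β) (⇑α)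

/-- A monoid `M` satisfies the identity `p.1 ≈ p.2`. -/
def MSatisfies (M : Type*) [Monoid M] (p : FM × FM) : Prop :=
  ∀ φ : FM →* M, φ p.1 = φ p.2

/-- A monoid `M` satisfies all identities of a congruence `θ`. -/
def SatisfiesAll (θ : Con FM) (M : Type*) [Monoid M] : Prop :=
  ∀ u v : FM, θ u v → MSatisfies M (u, v)

/-- Every element of the monoid `M` has a two-sided inverse, i.e. `M` is a group. -/
def IsGroupMonoid (M : Type*) [Monoid M] : Prop :=
  ∀ m : M, ∃ m' : M, m * m' = 1 ∧ m' * m = 1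

/-- The dual of a congruence: `θ^δ = {(rev u, rev v) : (u, v) ∈ θ}`. -/
def dualCon (θ : Con FM) : Con FM where
  r a b := θ a.reverse b.reverse
  iseqv := ⟨fun _ => θ.refl _, fun h => θ.symm h, fun h h' => θ.trans h h'⟩
  mul' := fun {a b c d} h₁ h₂ => by
    show θ (a * c).reverse (b * d).reverse
    rw [FreeMonoid.reverse_mul, FreeMonoid.reverse_mul]
    exact θ.mul h₂ h₁

/-- σ1 : `xysxty ≈ yxsxty`. -/
def idσ1 : FM × FM := (xL*yL*sL*xL*tL*yL, yL*xL*sL*xL*tL*yL)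
/-- σ2 : `xsytxy ≈ xsytyx`. -/
def idσ2 : FM × FM := (xL*sL*yL*tL*xL*yL, xL*sL*yL*tL*yL*xL)
/-- σ3 : `xsxyty ≈ xsyxty`. -/
def idσ3 : FM × FM := (xL*sL*xL*yL*tL*yL, xL*sL*yL*xL*tL*yL)
/-- α1 : `xysxtxhy ≈ yxsxtxhy`. -/
def idα1 : FM × FM := (xL*yL*sL*xL*tL*xL*hL*yL, yL*xL*sL*xL*tL*xL*hL*yL)
/-- α2 : `xysxtyhx ≈ yxsxtyhx`. -/
def idα2 : FM × FM := (xL*yL*sL*xL*tL*yL*hL*xL, yL*xL*sL*xL*tL*yL*hL*xL)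
/-- α3 : `xysytxhx ≈ yxsytxhx`. -/
def idα3 : FM × FM := (xL*yL*sL*yL*tL*xL*hL*xL, yL*xL*sL*yL*tL*xL*hL*xL)

/-- `aIdent i` is the identity `α_i` for `i ∈ {1, 2, 3}`. -/
def aIdent (i : ℕ) : FM × FM := if i = 1 then idα1 else if i = 2 then idα2 else idα3
/-- `bIdent i` is `β_i`, obtained from `α_i` by reversing both sides. -/
def bIdent (i : ℕ) : FM × FM := ((aIdent i).1.reverse, (aIdent i).2.reverse)

/-- The ordered product `f 0 * f 1 * ⋯ * f (n-1)`. -/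
def prodRange (n : ℕ) (f : ℕ → FM) : FM := ((List.range n).map f).prod
/-- The ordered product `f 0 * f 1 * ⋯ * f (n-1)` over `Fin n`. -/
def prodFin (n : ℕ) (f : Fin n → FM) : FM := ((List.finRange n).map f).prod

/-- The word `w_n[π,τ]` (0-based indices). -/
def wWord (n : ℕ) (π τ : Equiv.Perm (Fin n)) : FM :=
  prodRange n (fun i => zV i * tV i) * xL *
    prodFin n (fun i => zV (π i) * zV (n + τ i)) * xL *
    prodRange n (fun i => tV (n + i) * zV (n + i))

/-- The word `w_n'[π,τ]`. -/
def wWord' (n : ℕ) (π τ : Equiv.Perm (Fin n)) : FM :=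
  prodRange n (fun i => zV i * tV i) * (xL * xL) *
    prodFin n (fun i => zV (π i) * zV (n + τ i)) *
    prodRange n (fun i => tV (n + i) * zV (n + i))

/-- The word `c_{n,m}[ρ]`. -/
def cWord (n m : ℕ) (ρ : Equiv.Perm (Fin (n + m))) : FM :=
  prodRange n (fun i => zV i * tV i) * (xL * yL) * tL *
    prodRange m (fun i => zV (n + i) * tV (n + i)) * xL *
    prodFin (n + m) (fun i => zV (ρ i)) * yL

/-- The word `c'_{n,m}[ρ]`. -/
def cWord' (n m : ℕ) (ρ : Equiv.Perm (Fin (n + m))) : FM :=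
  prodRange n (fun i => zV i * tV i) * (yL * xL) * tL *
    prodRange m (fun i => zV (n + i) * tV (n + i)) * xL *
    prodFin (n + m) (fun i => zV (ρ i)) * yL

/-- The word `c_{n,m,k}[ρ]`. -/
def cWord3 (n m k : ℕ) (ρ : Equiv.Perm (Fin (n + m + k))) : FM :=
  prodRange n (fun i => zV i * tV i) * (xL * yL) * tL *
    prodRange m (fun i => zV (n + i) * tV (n + i)) * xL *
    prodFin (n + m + k) (fun i => zV (ρ i)) * yL *
    prodRange k (fun i => tV (n + m + i) * zV (n + m + i))

/-- The word `c'_{n,m,k}[ρ]`. -/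
def cWord3' (n m k : ℕ) (ρ : Equiv.Perm (Fin (n + m + k))) : FM :=
  prodRange n (fun i => zV i * tV i) * (yL * xL) * tL *
    prodRange m (fun i => zV (n + i) * tV (n + i)) * xL *
    prodFin (n + m + k) (fun i => zV (ρ i)) * yL *
    prodRange k (fun i => tV (n + m + i) * zV (n + m + i))

/-- The equational theory of `D_∞`. -/
def θDinf : Con FM :=
  fiCon {(xL^2, xL^3), (xL^2 * yL, yL * xL^2), idσ1, idσ2, idσ3}
/-- The equational theory of `N`. -/
def θN : Con FM :=
  fiCon {(xL^2, xL^3), (xL^2 * yL, yL * xL^2), (xL*yL*xL*zL*xL, xL^2*yL*zL), idσ2, idσ3}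
/-- The equational theory of `K`. -/
def θK : Con FM :=
  fiCon {(xL^2*yL, xL^2*yL*xL), (xL*yL*xL, xL*yL*xL^2), (xL^2*yL^2, yL^2*xL^2)}
/-- The identity basis of `P_n`. -/
def basisP (n : ℕ) : Set (FM × FM) :=
  {(xL^n, xL^(n+1)), (xL^n * yL, yL * xL^n), (xL^2*yL, xL*yL*xL)}
/-- The equational theory of `P_n`. -/
def θP (n : ℕ) : Con FM := fiCon (basisP n)
/-- The equational theory of `R`. -/
def θR : Con FM :=
  fiCon ({(xL^2, xL^3), (xL^2*yL, yL*xL^2), idσ1, idσ2} ∪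
    {p : FM × FM | ∃ (n : ℕ) (π τ : Equiv.Perm (Fin n)),
        1 ≤ n ∧ p = (wWord n π τ, wWord' n π τ)})
/-- The equational theory of `Q_{r,s}`. -/
def θQ (r s : ℕ) : Con FM :=
  fiCon ({(xL^2, xL^3), (xL^2*yL, yL*xL^2), idσ3} ∪
    {p : FM × FM | ∃ i : ℕ, (i = 1 ∨ i = 2 ∨ i = 3) ∧ i ≠ r ∧ p = aIdent i} ∪
    {p : FM × FM | ∃ j : ℕ, (j = 1 ∨ j = 2 ∨ j = 3) ∧ j ≠ s ∧ p = bIdent j} ∪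
    {p : FM × FM | ∃ (n m : ℕ) (ρ : Equiv.Perm (Fin (n + m))),
        p = (cWord n m ρ, cWord' n m ρ) ∨
        p = ((cWord n m ρ).reverse, (cWord' n m ρ).reverse)})
/-- The equational theory of the variety `SL` of semilattice monoids. -/
def θSL : Con FM := fiCon {(xL, xL^2), (xL*yL, yL*xL)}

/-- `u` is a factor (contiguous subword) of `w`. -/
def IsFactor (u w : FM) : Prop := ∃ p q : FM, p * u * q = w

lemma isFactor_left {a b w : FM} (h : IsFactor (a * b) w) : IsFactor a w := by
  obtain ⟨p, q, hpq⟩ := h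
  exact ⟨p, b * q, by rw [← hpq]; simp [mul_assoc]⟩

lemma isFactor_right {a b w : FM} (h : IsFactor (a * b) w) : IsFactor b w := by
  obtain ⟨p, q, hpq⟩ := h
  exact ⟨p * a, q, by rw [← hpq]; simp [mul_assoc]⟩

/-- The Rees congruence associated with the ideal of non-factors of `w`. -/
def reesCon (w : FM) : Con FM where
  r u v := u = v ∨ (¬ IsFactor u w ∧ ¬ IsFactor v w)
  iseqv := by
    refine ⟨fun _ => Or.inl rfl, ?_, ?_⟩
    · intro a b h
      rcases h with rfl | ⟨h1, h2⟩
      · exact Or.inl rfl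
      · exact Or.inr ⟨h2, h1⟩
    · intro a b c h h'
      rcases h with rfl | ⟨h1, h2⟩
      · exact h'
      · rcases h' with rfl | ⟨h3, h4⟩
        · exact Or.inr ⟨h1, h2⟩
        · exact Or.inr ⟨h1, h4⟩
  mul' := by
    rintro a b c d (rfl | ⟨h1, h2⟩) (rfl | ⟨h3, h4⟩)
    · exact Or.inl rfl
    · exact Or.inr ⟨fun h => h3 (isFactor_right h), fun h => h4 (isFactor_right h)⟩
    · exact Or.inr ⟨fun h => h1 (isFactor_left h), fun h => h2 (isFactor_left h)⟩
    · exact Or.inr ⟨fun h => h1 (isFactor_left h), fun h => h2 (isFactor_left h)⟩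

/-- The Rees quotient monoid `S(w)`. -/
abbrev SMon (w : FM) : Type := (reesCon w).Quotient

/-- The number of occurrences of the letter `a` in the word `w`. -/
def occ (w : FM) (a : ℕ) : ℕ := (FreeMonoid.toList w).count a

/-- A word in which every letter occurs at most once. -/
def LinearW (w : FM) : Prop := ∀ a : ℕ, occ w a ≤ 1

/-- Assemble the word `b0 * t_1 * b_1 * ⋯ * t_m * b_m` from a first block and a list
of (simple letter, block) pairs. -/
def assemble (b0 : FM) (rest : List (ℕ × FM)) : FM :=
  b0 * (rest.map (fun p => FreeMonoid.of p.1 * p.2)).prod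

/-- `(b0, rest)` is the decomposition of `w` into alternating simple letters and blocks
consisting of multiple letters. -/
def IsDecomposition (w : FM) (b0 : FM) (rest : List (ℕ × FM)) : Prop :=
  w = assemble b0 rest ∧
  (∀ p ∈ rest, occ w p.1 = 1) ∧
  (∀ a ∈ FreeMonoid.toList b0, 2 ≤ occ w a) ∧
  (∀ p ∈ rest, ∀ a ∈ FreeMonoid.toList p.2, 2 ≤ occ w a)

/-- The identity `u ≈ v` is linear-balanced. -/
def LinearBalanced (u v : FM) : Prop :=
  ∃ (b0 c0 : FM) (urest vrest : List (ℕ × FM)),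
    IsDecomposition u b0 urest ∧ IsDecomposition v c0 vrest ∧
    urest.map Prod.fst = vrest.map Prod.fst ∧
    ∀ a : ℕ, (2 ≤ occ u a ∨ 2 ≤ occ v a) →
      occ b0 a = occ c0 a ∧ occ b0 a ≤ 1 ∧
      ∀ q ∈ urest.zip vrest, occ q.1.2 a = occ q.2.2 a ∧ occ q.1.2 a ≤ 1

/-- `w` is an isoterm for `θ`. -/
def IsIsoterm (θ : Con FM) (w : FM) : Prop := ∀ w' : FM, θ w w' → w' = w

/-! In an aperiodic variety a nontrivial identity `x^a ≈ x^b` with `a < b` already implies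
`x^a ≈ x^(a+1)`, and the exponents `a` with `x^a ≈ x^(a+1)` form an upper set. Let `S` be the
union of these upper sets for `θX` and `θY`. Collapsing all letters to `x` shows that both
congruences, hence their join, lie below the congruence identifying two words when they have equal
length or both lengths are in `S`. So `x^n ≈ x^m` in the join forces `n ∈ S`, and then
`x^n ≈ x^m` holds in the theory that put `n` there. -/

section PowerStabilization

variable {M : Type*} [Monoid M] {g : M}

theorem pow_eq_of_pow_eq_pow_succ {a c : ℕ} (h : g ^ a = g ^ (a + 1)) (hac : a ≤ c) :
    g ^ c = g ^ a := by
  induction c, hac using Nat.le_induction with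
  | base => rfl
  | succ c _ ih => rw [pow_succ, ih, ← pow_succ, ← h]

theorem isUpperSet_setOf_pow_eq_pow_succ (g : M) : IsUpperSet {a : ℕ | g ^ a = g ^ (a + 1)} :=
  fun a b hab h => by
    rw [Set.mem_ofPred_eq, pow_eq_of_pow_eq_pow_succ h hab,
      pow_eq_of_pow_eq_pow_succ h (hab.trans b.le_succ)]

theorem pow_add_mul_eq_of_pow_eq_pow_add {a d : ℕ} (h : g ^ a = g ^ (a + d)) (t : ℕ) :
    g ^ (a + t * d) = g ^ a := by
  induction t with
  | zero => simp
  | succ t ih => rw [add_one_mul, ← add_assoc, pow_add, ih, ← pow_add, ← h]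

/-- Shifting `a` and `a + 1` by the same multiple of `b - a` beyond `k` reaches `g ^ k` twice. -/
theorem pow_eq_pow_succ_of_pow_eq_pow {k a b : ℕ} (hk : g ^ k = g ^ (k + 1)) (hab : a < b)
    (h : g ^ a = g ^ b) : g ^ a = g ^ (a + 1) := by
  obtain ⟨d, rfl⟩ := Nat.exists_eq_add_of_lt hab
  have hper := pow_add_mul_eq_of_pow_eq_pow_add (h.trans (by rw [add_assoc])) k
  have hbig : k ≤ a + k * (d + 1) := by nlinarith
  calc g ^ a = g ^ k := hper.symm.trans (pow_eq_of_pow_eq_pow_succ hk hbig)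
    _ = g ^ (a + k * (d + 1) + 1) :=
      (pow_eq_of_pow_eq_pow_succ hk (hbig.trans (Nat.le_succ _))).symm
    _ = g ^ (a + 1) := by rw [pow_succ, hper, ← pow_succ]

end PowerStabilization

def lengthCon {α : Type*} (S : Set ℕ) (hS : IsUpperSet S) : Con (FreeMonoid α) where
  r u v := u.length = v.length ∨ (u.length ∈ S ∧ v.length ∈ S)
  iseqv := by
    refine ⟨fun _ => Or.inl rfl, ?_, ?_⟩
    · rintro u v (h | ⟨hu, hv⟩)
      exacts [Or.inl h.symm, Or.inr ⟨hv, hu⟩]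
    · rintro u v w (h | ⟨hu, hv⟩) (h' | ⟨hv', hw⟩)
      exacts [Or.inl (h.trans h'), Or.inr ⟨h ▸ hv', hw⟩, Or.inr ⟨hu, h' ▸ hv⟩, Or.inr ⟨hu, hw⟩]
  mul' := by
    rintro u v u' v' (h | ⟨hu, hv⟩) (h' | ⟨hu', hv'⟩) <;>
      simp only [FreeMonoid.length_mul]
    · exact Or.inl (by rw [h, h'])
    · exact Or.inr ⟨hS le_add_self hu', hS le_add_self hv'⟩
    all_goals exact Or.inr ⟨hS le_self_add hu, hS le_self_add hv⟩

theorem FreeMonoid.lift_const_apply {α M : Type*} [Monoid M] (m : M) (u : FreeMonoid α) :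
    FreeMonoid.lift (fun _ => m) u = m ^ u.length := by
  rw [FreeMonoid.lift_apply, List.map_const', List.prod_replicate]; rfl

theorem FreeMonoid.length_of_pow {α : Type*} (a : α) (n : ℕ) : (of a ^ n).length = n := by
  induction n with
  | zero => rfl
  | succ n ih => rw [pow_succ, length_mul, ih, length_of]

theorem Con.pow_rel_pow_iff {N : Type*} [Monoid N] (c : Con N) (x : N) (a b : ℕ) :
    c (x ^ a) (x ^ b) ↔ (x : c.Quotient) ^ a = (x : c.Quotient) ^ b :=
  c.eq.symm

theorem le_lengthCon {θ : Con FM} (hθ : IsFullyInvariant θ) {k : ℕ}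
    (hk : θ (xL ^ k) (xL ^ (k + 1))) {S : Set ℕ} (hS : IsUpperSet S)
    (hSθ : {a : ℕ | (xL : θ.Quotient) ^ a = (xL : θ.Quotient) ^ (a + 1)} ⊆ S) :
    θ ≤ lengthCon S hS := by
  rw [θ.pow_rel_pow_iff] at hk
  have hmem : ∀ {a b : ℕ}, a < b → θ (xL ^ a) (xL ^ b) → a ∈ S ∧ b ∈ S := by
    intro a b hab h
    rw [θ.pow_rel_pow_iff] at h
    have ha : a ∈ S := hSθ (pow_eq_pow_succ_of_pow_eq_pow hk hab h)
    exact ⟨ha, hS hab.le ha⟩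
  intro u v huv
  have hx := hθ (FreeMonoid.lift fun _ => xL) u v huv
  rw [FreeMonoid.lift_const_apply, FreeMonoid.lift_const_apply] at hx
  rcases lt_trichotomy u.length v.length with hlt | heq | hgt
  · exact Or.inr (hmem hlt hx)
  · exact Or.inl heq
  · exact Or.inr (hmem hgt (θ.symm hx)).symm

theorem aperiodic_power_identity_in_join_general (θX θY : Con FM)
    (hfiX : IsFullyInvariant θX) (hfiY : IsFullyInvariant θY)
    (hapX : ∃ k : ℕ, 1 ≤ k ∧ θX (xL ^ k) (xL ^ (k + 1)))
    (hapY : ∃ k : ℕ, 1 ≤ k ∧ θY (xL ^ k) (xL ^ (k + 1)))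
    (n m : ℕ) (hnm : n < m)
    (h : (θX ⊔ θY) (xL ^ n) (xL ^ m)) :
    θX (xL ^ n) (xL ^ m) ∨ θY (xL ^ n) (xL ^ m) := by
  obtain ⟨kX, -, hkX⟩ := hapX
  obtain ⟨kY, -, hkY⟩ := hapY
  set gX : θX.Quotient := ↑xL
  set gY : θY.Quotient := ↑xL
  set S := {a : ℕ | gX ^ a = gX ^ (a + 1)} ∪ {a : ℕ | gY ^ a = gY ^ (a + 1)}
  have hS : IsUpperSet S :=
    (isUpperSet_setOf_pow_eq_pow_succ gX).union (isUpperSet_setOf_pow_eq_pow_succ gY)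
  have hD : (xL ^ n).length = (xL ^ m).length ∨ ((xL ^ n).length ∈ S ∧ (xL ^ m).length ∈ S) :=
    sup_le (le_lengthCon hfiX hkX hS Set.subset_union_left)
      (le_lengthCon hfiY hkY hS Set.subset_union_right) h
  simp only [xL, FreeMonoid.length_of_pow] at hD
  rw [θX.pow_rel_pow_iff, θY.pow_rel_pow_iff]
  rcases hD with hlen | ⟨hX | hY, -⟩
  · exact absurd hlen hnm.ne
  · exact .inl (pow_eq_of_pow_eq_pow_succ hX hnm.le).symm
  · exact .inr (pow_eq_of_pow_eq_pow_succ hY hnm.le).symm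

/-- **Lemma 2.10.** If two aperiodic monoid varieties are such that their meet
satisfies a non-trivial identity `x^n ≈ x^m`, then this identity holds in one of
them. -/
theorem aperiodic_power_identity_in_join (θX θY : Con FM)
    (hfiX : IsFullyInvariant θX) (hfiY : IsFullyInvariant θY)
    (hapX : ∃ k : ℕ, 1 ≤ k ∧ θX (xL ^ k) (xL ^ (k + 1)))
    (hapY : ∃ k : ℕ, 1 ≤ k ∧ θY (xL ^ k) (xL ^ (k + 1)))
    (n m : ℕ) (hn : 1 ≤ n) (hnm : n < m)
    (h : (θX ⊔ θY) (xL ^ n) (xL ^ m)) :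
    θX (xL ^ n) (xL ^ m) ∨ θY (xL ^ n) (xL ^ m) :=
  aperiodic_power_identity_in_join_general θX θY hfiX hfiY hapX hapY n m hnm h
end

section
/- Lemma 2.13: Let θ be a fully invariant congruence on F = FreeMonoid ℕ with (x^n, x^{n+1}) ∈ θ for some n ≥ 2. Suppose θ ⊆ θ_{C_2}, where θ_{C_2} = θ({x² ≈ x³, xy ≈ yx}) (i.e. the variety C_2 is contained in the variety V corresponding to θ), and suppose there exists (u,v) ∈ θ with (u,v) ∉ θ_E, where θ_E = θ({x² ≈ x³, x²y² ≈ y²x², xtx ≈ x²t}) (i.e. the variety E is not contained in V). Then (x^n y x^n, y x^n) ∈ θ, i.e. V satisfies the identity x^n y x^n ≈ y x^n. -/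
/-- The equational theory of `C₂`. -/
def θC2 : Con FM := fiCon {(xL ^ 2, xL ^ 3), (xL * yL, yL * xL)}
/-- The equational theory of `E`. -/
def θE : Con FM :=
  fiCon {(xL ^ 2, xL ^ 3), (xL ^ 2 * yL ^ 2, yL ^ 2 * xL ^ 2), (xL * tL * xL, xL ^ 2 * tL)}


/-!
Two words are equal in `E` as soon as they contain the same letters with the same multiplicities
up to `2` and, for every letter `t` occurring once, the same letters occur before `t`: the identity
`xtx ≈ x²t` moves every later occurrence of a letter next to its first one, `x² ≈ x³` trims it to a
square, and `x²y² ≈ y²x²` lets these squares pass each other. An identity `u ≈ v` of `V` holds in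
`C₂`, so its multiplicities agree; if it fails in `E`, some letter `c` occurs before a simple
letter `t` in `u` but not in `v`, and deleting all other letters gives `x^p y x^q ≈ y x^s` with
`p ≥ 1`. Substituting `x^n` for `x` and multiplying by `x^n` on the right, `x^n ≈ x^{n+1}`
collapses every power of `x` to `x^n`.
-/

open FreeMonoid

lemma Con.rel_pow_of_le {M : Type*} [Monoid M] (c : Con M) {a : M} {n m : ℕ}
    (h : c (a ^ n) (a ^ (n + 1))) (hm : n ≤ m) : c (a ^ m) (a ^ n) := by
  induction m, hm using Nat.le_induction with
  | base => exact c.refl _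
  | succ m hm ih =>
    have step := c.mul (c.refl (a ^ (m - n))) (c.symm h)
    rw [← pow_add, ← pow_add, show m - n + (n + 1) = m + 1 by omega,
      show m - n + n = m by omega] at step
    exact c.trans step ih

lemma fiCon_map_of_mem {E : Set (FM × FM)} {p : FM × FM} (hp : p ∈ E) (σ : FM →* FM) :
    fiCon E (σ p.1) (σ p.2) :=
  fun _ hc => hc.1 σ _ _ (hc.2 p hp)

def identityCon (M : Type*) [Monoid M] : Con FM where
  r u v := MSatisfies M (u, v)
  iseqv := ⟨fun _ _ => rfl, fun h φ => (h φ).symm, fun h h' φ => (h φ).trans (h' φ)⟩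
  mul' h h' φ := by simp only [map_mul, h φ, h' φ]

lemma MSatisfies.of_fiCon {M : Type*} [Monoid M] {E : Set (FM × FM)}
    (hE : ∀ p ∈ E, MSatisfies M p) {u v : FM} (h : fiCon E u v) : MSatisfies M (u, v) :=
  h (identityCon M) ⟨fun σ _ _ huv φ => huv (φ.comp σ), hE⟩

def Trunc2 : Type := {k : ℕ // k ≤ 2}

instance : CommMonoid Trunc2 where
  mul a b := ⟨min (a.1 + b.1) 2, min_le_right _ _⟩
  one := ⟨0, by omega⟩
  mul_assoc a b c := Subtype.ext (by
    show min (min (a.1 + b.1) 2 + c.1) 2 = min (a.1 + min (b.1 + c.1) 2) 2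
    omega)
  one_mul a := Subtype.ext (by show min (0 + a.1) 2 = a.1; have := a.2; omega)
  mul_one a := Subtype.ext (by show min (a.1 + 0) 2 = a.1; have := a.2; omega)
  mul_comm a b := Subtype.ext (by show min (a.1 + b.1) 2 = min (b.1 + a.1) 2; omega)

lemma Trunc2.val_one : (1 : Trunc2).1 = 0 := rfl

lemma Trunc2.val_mul (a b : Trunc2) : (a * b).1 = min (a.1 + b.1) 2 := rfl

lemma Trunc2.val_pow (a : Trunc2) (k : ℕ) : (a ^ k).1 = min (k * a.1) 2 := by
  induction k with
  | zero => rw [pow_zero, zero_mul]; rfl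
  | succ k ih => rw [pow_succ, Trunc2.val_mul, ih, Nat.succ_mul]; omega

lemma trunc2_satisfies_C2 : ∀ p ∈ ({(xL ^ 2, xL ^ 3), (xL * yL, yL * xL)} : Set (FM × FM)),
    MSatisfies Trunc2 p := by
  rintro _ (rfl | rfl) φ
  · exact Subtype.ext (by simp only [map_pow, Trunc2.val_pow]; omega)
  · simp only [map_mul]
    exact mul_comm _ _

def countTrunc2 (a : ℕ) : FM →* Trunc2 :=
  FreeMonoid.lift fun b => if b = a then ⟨1, by omega⟩ else 1

lemma countTrunc2_ofList (a : ℕ) (l : List ℕ) :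
    (countTrunc2 a (ofList l)).1 = min (l.count a) 2 := by
  induction l with
  | nil => rfl
  | cons b l ih =>
    rw [ofList_cons, map_mul, Trunc2.val_mul, ih, List.count_cons]
    by_cases hb : b = a <;> simp [countTrunc2, hb, Trunc2.val_one]; omega

lemma min_count_eq_of_θC2 {u v : FM} (h : θC2 u v) (a : ℕ) :
    min (u.toList.count a) 2 = min (v.toList.count a) 2 := by
  rw [← countTrunc2_ofList, ← countTrunc2_ofList, ofList_toList, ofList_toList,
    MSatisfies.of_fiCon trunc2_satisfies_C2 h (countTrunc2 a)]

def substXY (w z : FM) : FM →* FM := FreeMonoid.lift fun i => if i = 0 then w else z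

@[simp] lemma substXY_xL (w z : FM) : substXY w z xL = w := by simp [substXY, xL]

@[simp] lemma substXY_yL (w z : FM) : substXY w z yL = z := by simp [substXY, yL]

@[simp] lemma substXY_tL (w z : FM) : substXY w z tL = z := by simp [substXY, tL]

lemma θE_sq_cube (w : FM) : θE (w ^ 2) (w ^ 3) := by
  have h : θE _ _ := fiCon_map_of_mem (p := (xL ^ 2, xL ^ 3)) (by simp) (substXY w 1)
  simpa using h

lemma θE_sq_comm (w z : FM) : θE (w ^ 2 * z ^ 2) (z ^ 2 * w ^ 2) := by
  have h : θE _ _ :=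
    fiCon_map_of_mem (p := (xL ^ 2 * yL ^ 2, yL ^ 2 * xL ^ 2)) (by simp) (substXY w z)
  simpa using h

lemma θE_absorb (w z : FM) : θE (w * z * w) (w ^ 2 * z) := by
  have h : θE _ _ := fiCon_map_of_mem (p := (xL * tL * xL, xL ^ 2 * tL)) (by simp) (substXY w z)
  simpa using h

lemma θE_sq_mul_mul_self (w z : FM) : θE (w ^ 2 * z * w) (w ^ 2 * z) := by
  have h := θE_absorb w (w * z)
  rw [← mul_assoc w w z, ← pow_two, ← mul_assoc, ← pow_succ] at h
  exact θE.trans h (θE.mul (θE.symm (θE_sq_cube w)) (θE.refl z))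

abbrev EEq (l m : List ℕ) : Prop := θE (ofList l) (ofList m)

infix:50 " ≈ₑ " => EEq

instance : Trans EEq EEq EEq := ⟨θE.trans⟩

lemma EEq.symm {l m : List ℕ} (h : l ≈ₑ m) : m ≈ₑ l := θE.symm h

lemma EEq.append_left (k : List ℕ) {l m : List ℕ} (h : l ≈ₑ m) : k ++ l ≈ₑ k ++ m := by
  simpa only [EEq, ofList_append] using θE.mul (θE.refl _) h

lemma EEq.append_right {l m : List ℕ} (h : l ≈ₑ m) (k : List ℕ) : l ++ k ≈ₑ m ++ k := by
  simpa only [EEq, ofList_append] using θE.mul h (θE.refl _)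

lemma EEq.cons₂ (a : ℕ) {l m : List ℕ} (h : l ≈ₑ m) : a :: a :: l ≈ₑ a :: a :: m :=
  h.append_left [a, a]

lemma eEq_sq_swap (a b : ℕ) (l : List ℕ) : a :: a :: b :: b :: l ≈ₑ b :: b :: a :: a :: l := by
  simpa [EEq, pow_two, mul_assoc] using θE.mul (θE_sq_comm (of a) (of b)) (θE.refl (ofList l))

lemma eEq_sq_filter (a : ℕ) (l : List ℕ) : a :: a :: l ≈ₑ a :: a :: l.filter (· != a) := by
  induction l using List.reverseRecOn with
  | nil => exact θE.refl _
  | append_singleton l b ih =>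
    by_cases hb : b = a
    · subst hb
      have h : b :: b :: (l ++ [b]) ≈ₑ b :: b :: l := by
        simpa [EEq, ofList_append, pow_two, mul_assoc] using
          θE_sq_mul_mul_self (of b) (ofList l)
      rw [List.filter_append, List.filter_singleton, bne_self_eq_false, cond_false,
        List.append_nil]
      exact θE.trans h ih
    · rw [List.filter_append, List.filter_singleton, bne_iff_ne.mpr hb, cond_true]
      exact ih.append_right [b]

lemma eEq_gather {a : ℕ} {l : List ℕ} (ha : a ∈ l) : a :: l ≈ₑ a :: a :: l.filter (· != a) := by
  obtain ⟨s, r, rfl⟩ := List.append_of_mem ha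
  have h : a :: (s ++ a :: r) ≈ₑ a :: a :: (s ++ r) := by
    simpa [EEq, ofList_append, pow_two, mul_assoc] using
      θE.mul (θE_absorb (of a) (ofList s)) (θE.refl (ofList r))
  have hf : (s ++ a :: r).filter (· != a) = (s ++ r).filter (· != a) := by simp
  rw [hf]
  exact θE.trans h (eEq_sq_filter a (s ++ r))

lemma count_filter_bne_self (a : ℕ) (l : List ℕ) : (l.filter (· != a)).count a = 0 :=
  List.count_eq_zero.mpr (by simp)

lemma takeWhile_filter_bne {b t : ℕ} (h : t ≠ b) (l : List ℕ) :
    (l.filter (· != b)).takeWhile (· != t) = (l.takeWhile (· != t)).filter (· != b) := by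
  rw [List.takeWhile_filter]
  congr 2
  funext x
  by_cases hx : x = b
  · subst hx
    simp [Ne.symm h]
  · simp [hx]

lemma filter_bne_cons_of_not_mem {a : ℕ} {l : List ℕ} (h : a ∉ l) :
    (a :: l).filter (· != a) = l := by
  rw [List.filter_cons_of_neg (by simp), List.filter_eq_self]
  intro x hx
  simpa using ne_of_mem_of_not_mem hx h

/- The first letter `b ≠ a` is not simple, as `a` occurs before it: gather the occurrences of
`b`, move the square of `a` to the front of the rest, and swap the two squares. -/
theorem eEq_bubble {a : ℕ} : ∀ {l : List ℕ}, 2 ≤ l.count a →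
    (∀ t, l.count t = 1 → a ∈ l.takeWhile (· != t)) → l ≈ₑ a :: a :: l.filter (· != a)
  | [], hcount, _ => by simp at hcount
  | b :: l, hcount, hfirst => by
    by_cases hba : b = a
    · subst hba
      rw [List.count_cons_self] at hcount
      simpa using eEq_gather (List.count_pos_iff.mp (by omega))
    have hb : b ∈ l := by
      by_contra hbl
      simpa using hfirst b (by simp [List.count_eq_zero.mpr hbl])
    have hw : l.filter (· != b) ≈ₑ a :: a :: (l.filter (· != b)).filter (· != a) := by
      refine eEq_bubble ?_ fun t ht => ?_
      · rw [List.count_filter (p := (· != b)) (bne_iff_ne.mpr (Ne.symm hba))]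
        simpa [List.count_cons, hba] using hcount
      · have htb : t ≠ b := by
          rintro rfl
          rw [count_filter_bne_self] at ht
          exact zero_ne_one ht
        rw [List.count_filter (p := (· != b)) (bne_iff_ne.mpr htb)] at ht
        have := hfirst t (by simpa [List.count_cons, Ne.symm htb] using ht)
        rw [List.takeWhile_cons_of_pos (p := (· != t)) (by simpa using Ne.symm htb)] at this
        rw [takeWhile_filter_bne htb, List.mem_filter]
        exact ⟨List.mem_of_ne_of_mem (Ne.symm hba) this, bne_iff_ne.mpr (Ne.symm hba)⟩
    have hba' : b ∈ l.filter (· != a) := List.mem_filter.mpr ⟨hb, bne_iff_ne.mpr hba⟩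
    have hcomm : (l.filter (· != b)).filter (· != a) = (l.filter (· != a)).filter (· != b) := by
      simp only [List.filter_filter, Bool.and_comm]
    calc b :: l ≈ₑ b :: b :: l.filter (· != b) := eEq_gather hb
      _ ≈ₑ b :: b :: a :: a :: (l.filter (· != a)).filter (· != b) := hcomm ▸ hw.cons₂ b
      _ ≈ₑ a :: a :: b :: b :: (l.filter (· != a)).filter (· != b) := eEq_sq_swap b a _
      _ ≈ₑ a :: a :: (b :: l).filter (· != a) := by
        rw [List.filter_cons_of_pos (p := (· != a)) (by simpa using hba)]
        exact (eEq_gather hba').symm.cons₂ a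
termination_by l => l.length
decreasing_by simp only [List.length_cons]; exact Nat.lt_succ_of_le (List.length_filter_le _ _)

def SameEInvariants (u v : List ℕ) : Prop :=
  (∀ c, min (u.count c) 2 = min (v.count c) 2) ∧
    ∀ c t, u.count t = 1 → (c ∈ u.takeWhile (· != t) ↔ c ∈ v.takeWhile (· != t))

lemma SameEInvariants.filter_bne {u v : List ℕ} (h : SameEInvariants u v) (a : ℕ) :
    SameEInvariants (u.filter (· != a)) (v.filter (· != a)) := by
  have hcount : ∀ (l : List ℕ) c, c ≠ a → (l.filter (· != a)).count c = l.count c :=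
    fun l c hc => List.count_filter (p := (· != a)) (by simpa using hc)
  refine ⟨fun c => ?_, fun c t ht => ?_⟩
  · by_cases hc : c = a
    · subst hc
      simp only [count_filter_bne_self]
    · rw [hcount u c hc, hcount v c hc]
      exact h.1 c
  · have hta : t ≠ a := by
      rintro rfl
      rw [count_filter_bne_self] at ht
      exact zero_ne_one ht
    rw [hcount u t hta] at ht
    simp only [takeWhile_filter_bne hta, List.mem_filter, h.2 c t ht]

theorem SameEInvariants.eEq : ∀ {u v : List ℕ}, SameEInvariants u v → u ≈ₑ v
  | [], v, h => by
    obtain rfl : v = [] := List.eq_nil_iff_forall_not_mem.mpr fun c hc => by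
      have := h.1 c
      simp only [List.count_nil] at this
      have := List.count_pos_iff.mpr hc
      omega
    exact θE.refl _
  | a :: u, v, h => by
    have hsimple : ∀ t, v.count t = 1 → (a :: u).count t = 1 := fun t ht => by
      have := h.1 t; omega
    by_cases ha : a ∈ u
    · have hu : 2 ≤ (a :: u).count a := by
        rw [List.count_cons_self]; have := List.count_pos_iff.mpr ha; omega
      have hv : 2 ≤ v.count a := by have := h.1 a; omega
      have hfirst : ∀ t, (a :: u).count t = 1 → a ∈ (a :: u).takeWhile (· != t) := by
        intro t ht
        have hta : t ≠ a := by rintro rfl; omega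
        simp [Ne.symm hta]
      have hrec := SameEInvariants.eEq (h.filter_bne a)
      calc a :: u ≈ₑ a :: a :: (a :: u).filter (· != a) := eEq_bubble hu hfirst
        _ ≈ₑ a :: a :: v.filter (· != a) := hrec.cons₂ a
        _ ≈ₑ v := (eEq_bubble hv fun t ht =>
          (h.2 a t (hsimple t ht)).mp (hfirst t (hsimple t ht))).symm
    · have hau : (a :: u).count a = 1 := by simp [List.count_eq_zero.mpr ha]
      obtain ⟨v, rfl⟩ : ∃ v', v = a :: v' := by
        match v, h with
        | [], h => have := h.1 a; simp [hau] at this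
        | b :: v', h =>
          -- a first letter `b ≠ a` of `v` would occur before `a` in `v` but not in `a :: u`
          obtain rfl : b = a := by
            by_contra hba
            simpa [hba] using (h.2 b a hau).mpr
          exact ⟨v', rfl⟩
      have hav : a ∉ v := by
        have := h.1 a; rw [hau, List.count_cons_self] at this
        exact List.count_eq_zero.mp (by omega)
      have hrec := SameEInvariants.eEq (h.filter_bne a)
      rw [filter_bne_cons_of_not_mem ha, filter_bne_cons_of_not_mem hav] at hrec
      exact hrec.append_left [a]
termination_by u => u.length
decreasing_by
  all_goals
    simp only [List.filter_cons, bne_self_eq_false, List.length_cons]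
    exact Nat.lt_succ_of_le (List.length_filter_le _ _)

def projXY (c t : ℕ) : FM →* FM :=
  FreeMonoid.lift fun i => if i = c then xL else if i = t then yL else 1

lemma projXY_ofList_of_not_mem {c t : ℕ} (hct : c ≠ t) {l : List ℕ} (ht : t ∉ l) :
    projXY c t (ofList l) = xL ^ l.count c := by
  induction l with
  | nil => rfl
  | cons b l ih =>
    rw [List.mem_cons, not_or] at ht
    rw [ofList_cons, map_mul, ih ht.2, List.count_cons]
    by_cases hb : b = c
    · subst hb
      simp [projXY, pow_succ']
    · simp [projXY, hb, Ne.symm ht.1]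

lemma projXY_ofList_of_count_eq_one {c t : ℕ} (hct : c ≠ t) {l : List ℕ}
    (ht : l.count t = 1) :
    ∃ q, projXY c t (ofList l) = xL ^ (l.takeWhile (· != t)).count c * yL * xL ^ q := by
  obtain ⟨s, r, rfl⟩ := List.append_of_mem (List.count_pos_iff.mp (by omega : 0 < l.count t))
  have hts : t ∉ s := fun h => by
    have := List.count_pos_iff.mpr h; simp at ht; omega
  have htr : t ∉ r := fun h => by
    have := List.count_pos_iff.mpr h; simp at ht; omega
  have hs : (s ++ t :: r).takeWhile (· != t) = s := by
    rw [List.takeWhile_append_of_pos (fun x hx => by simpa using ne_of_mem_of_not_mem hx hts)]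
    simp
  refine ⟨r.count c, ?_⟩
  rw [hs, ofList_append, ofList_cons, map_mul, map_mul, projXY_ofList_of_not_mem hct hts,
    projXY_ofList_of_not_mem hct htr, ← mul_assoc]
  simp [projXY, Ne.symm hct, yL]

lemma exists_xpow_y_xpow_rel_y_xpow {θ : Con FM} (hθ : IsFullyInvariant θ) {u v : FM}
    (huv : θ u v) {c t : ℕ} (htu : u.toList.count t = 1) (htv : v.toList.count t = 1)
    (hcu : c ∈ u.toList.takeWhile (· != t)) (hcv : c ∉ v.toList.takeWhile (· != t)) :
    ∃ p q s, 0 < p ∧ θ (xL ^ p * yL * xL ^ q) (yL * xL ^ s) := by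
  have hct : c ≠ t := by simpa using List.mem_takeWhile_imp hcu
  obtain ⟨q, hu⟩ := projXY_ofList_of_count_eq_one hct htu
  obtain ⟨s, hv⟩ := projXY_ofList_of_count_eq_one hct htv
  rw [ofList_toList] at hu hv
  rw [List.count_eq_zero.mpr hcv, pow_zero, one_mul] at hv
  refine ⟨_, q, s, List.count_pos_iff.mpr hcu, ?_⟩
  simpa only [hu, hv] using hθ (projXY c t) u v huv

lemma xpow_y_xpow_rel_y_xpow {θ : Con FM} (hθ : IsFullyInvariant θ) {n : ℕ}
    (hpow : θ (xL ^ n) (xL ^ (n + 1))) {p q s : ℕ} (hp : 0 < p)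
    (h : θ (xL ^ p * yL * xL ^ q) (yL * xL ^ s)) :
    θ (xL ^ n * yL * xL ^ n) (yL * xL ^ n) := by
  have hσ := θ.mul (hθ (substXY (xL ^ n) yL) _ _ h) (θ.refl (xL ^ n))
  have hl : substXY (xL ^ n) yL (xL ^ p * yL * xL ^ q) * xL ^ n
      = xL ^ (n * p) * yL * xL ^ (n * q + n) := by simp [pow_mul, pow_add, mul_assoc]
  have hr : substXY (xL ^ n) yL (yL * xL ^ s) * xL ^ n = yL * xL ^ (n * s + n) := by
    simp [pow_mul, pow_add, mul_assoc]
  rw [hl, hr] at hσ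
  have hcollapse : ∀ m, n ≤ m → θ (xL ^ m) (xL ^ n) := fun m hm => θ.rel_pow_of_le hpow hm
  have hleft : θ (xL ^ (n * p) * yL * xL ^ (n * q + n)) (xL ^ n * yL * xL ^ n) :=
    θ.mul (θ.mul (hcollapse _ (Nat.le_mul_of_pos_right n hp)) (θ.refl _))
      (hcollapse _ (by omega))
  have hright : θ (yL * xL ^ (n * s + n)) (yL * xL ^ n) :=
    θ.mul (θ.refl _) (hcollapse _ (by omega))
  exact θ.trans (θ.symm hleft) (θ.trans hσ hright)

theorem lemma_2_13_general (θ : Con FM) (hθ : IsFullyInvariant θ)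
    (n : ℕ) (hpow : θ (xL ^ n) (xL ^ (n + 1)))
    (hC2 : θ ≤ θC2)
    (hE : ∃ u v : FM, θ u v ∧ ¬ θE u v) :
    θ (xL ^ n * yL * xL ^ n) (yL * xL ^ n) := by
  obtain ⟨u, v, huv, hnE⟩ := hE
  have hcount := min_count_eq_of_θC2 (hC2 huv)
  have hinv : ¬ SameEInvariants u.toList v.toList := fun h =>
    hnE (by simpa only [EEq, ofList_toList] using h.eEq)
  obtain ⟨c, t, htu, hmismatch⟩ : ∃ c t, u.toList.count t = 1 ∧
      ¬ (c ∈ u.toList.takeWhile (· != t) ↔ c ∈ v.toList.takeWhile (· != t)) := by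
    simpa [SameEInvariants, hcount] using hinv
  have htv : v.toList.count t = 1 := by have := hcount t; omega
  obtain ⟨p, q, s, hp, h⟩ : ∃ p q s, 0 < p ∧ θ (xL ^ p * yL * xL ^ q) (yL * xL ^ s) := by
    by_cases hcu : c ∈ u.toList.takeWhile (· != t)
    · exact exists_xpow_y_xpow_rel_y_xpow hθ huv htu htv hcu fun hcv =>
        hmismatch (iff_of_true hcu hcv)
    · exact exists_xpow_y_xpow_rel_y_xpow hθ (θ.symm huv) htv htu (by tauto) hcu
  exact xpow_y_xpow_rel_y_xpow hθ hpow hp h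

/-- **Lemma 2.13.** If a variety `V` satisfies `x^n ≈ x^{n+1}` with `n ≥ 2`, contains
`C₂` and does not contain `E`, then `V` satisfies `x^n y x^n ≈ y x^n`. -/
theorem lemma_2_13 (θ : Con FM) (hθ : IsFullyInvariant θ)
    (n : ℕ) (hn : 2 ≤ n) (hpow : θ (xL ^ n) (xL ^ (n + 1)))
    (hC2 : θ ≤ θC2)
    (hE : ∃ u v : FM, θ u v ∧ ¬ θE u v) :
    θ (xL ^ n * yL * xL ^ n) (yL * xL ^ n) :=
  lemma_2_13_general θ hθ n hpow hC2 hE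
end

section
/- Lemma 2.19 (lattice-theoretic distributivity criterion): Let L be a complete lattice, let w ≤ v be elements of L, and let S be a subset of L. Assume: (i) for every u ∈ L with w ≤ u ≤ v there is a subset T ⊆ S such that u = v ⊓ sInf T; (ii) for all u, u' ∈ L with w ≤ u ≤ v and w ≤ u' ≤ v and every s ∈ S, if u ⊓ u' ≤ s then u ≤ s or u' ≤ s. Then the interval [w, v] is distributive: for all a, b, c ∈ L with w ≤ a, b, c ≤ v one has a ⊓ (b ⊔ c) = (a ⊓ b) ⊔ (a ⊓ c). -/
/-- **Lemma 2.19** (lattice-theoretic distributivity criterion). -/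
theorem interval_distributive_criterion {L : Type*} [CompleteLattice L]
    (w v : L) (hwv : w ≤ v) (S : Set L)
    (h1 : ∀ u : L, w ≤ u → u ≤ v → ∃ T ⊆ S, u = v ⊓ sInf T)
    (h2 : ∀ u u' : L, w ≤ u → u ≤ v → w ≤ u' → u' ≤ v →
        ∀ s ∈ S, u ⊓ u' ≤ s → u ≤ s ∨ u' ≤ s) :
    ∀ a b c : L, w ≤ a → a ≤ v → w ≤ b → b ≤ v → w ≤ c → c ≤ v →
      a ⊓ (b ⊔ c) = (a ⊓ b) ⊔ (a ⊓ c) := by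
  intro a b c hwa hav hwb hbv hwc hcv
  refine le_antisymm ?_ (sup_le (inf_le_inf_left a le_sup_left)
    (inf_le_inf_left a le_sup_right))
  obtain ⟨T, hTS, hT⟩ := h1 ((a ⊓ b) ⊔ (a ⊓ c))
    (le_sup_left.trans' (le_inf hwa hwb))
    (sup_le (inf_le_left.trans hav) (inf_le_left.trans hav))
  rw [hT]
  refine le_inf (inf_le_left.trans hav) (le_sInf fun s hs => ?_)
  have hsS := hTS hs
  have hx : (a ⊓ b) ⊔ (a ⊓ c) ≤ s := hT ▸ inf_le_right.trans (sInf_le hs)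
  have hab := h2 a b hwa hav hwb hbv s hsS (le_sup_left.trans hx)
  have hac := h2 a c hwa hav hwc hcv s hsS (le_sup_right.trans hx)
  rcases hab with h | hb
  · exact inf_le_left.trans h
  rcases hac with h | hc
  · exact inf_le_left.trans h
  · exact inf_le_right.trans (sup_le hb hc)
end

section
/- Lemma (Section 3.3, first lemma): Let n ≥ 1 and let π, τ, ξ, η be permutations of {1,…,n} such that the words w_n[π,τ] and w_n[ξ,η] are distinct. Then the monoid S(w_n[ξ,η]) satisfies the identity w_n[π,τ] ≈ w_n'[π,τ]. -/
/-! Let `σ` be a substitution, `u = w_n[π,τ] = A x B' x C`, `u' = w_n'[π,τ]` and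
`W = w_n[ξ,η] = A x B x C`. If `σ x` is empty then `σ u = σ u'`; otherwise neither is a factor of
`W`, so both are zero in `S(W)`. With `x = 0`, `z_i = 10 + 2i` and `t_i = 11 + 2i`, the letters
occurring twice in `W` are exactly the even ones, and `A x` and `x C` alternate in parity, so a
factor of `W` of length at least two made of even letters is a factor of `x B x`. If `σ u'` were a
factor, `σx σx` would be such a factor (its letters occur twice), forcing `σ x = x` and `xx` to be
a factor of `x B x`, impossible as `B ≠ []`. If `σ u` were a factor, the same argument applied to
`σx σ(B') σx` gives `σ x = x` and `σ(B') = B`. Every even letter of `A` and `C` then occurs in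
`σ(B')`, which pins `σ(A) = A` and `σ(C) = C`; moreover `σ` preserves the parity of the letters of
`A` and `C`, and as these alternate in parity, `σ` fixes each of them, so `u = W`. -/

namespace List

variable {α : Type*}

theorem append_cons_eq_append_cons_iff {x₁ x₂ z₁ z₂ : List α} {a : α} (h₁ : a ∉ x₁)
    (h₂ : a ∉ x₂) : x₁ ++ a :: z₁ = x₂ ++ a :: z₂ ↔ x₁ = x₂ ∧ z₁ = z₂ := by
  refine ⟨fun h => ?_, fun h => by rw [h.1, h.2]⟩
  rcases append_eq_append_iff.1 h with ⟨c, rfl, h⟩ | ⟨c, rfl, h⟩ <;>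
    cases c <;> simp_all

theorem eq_of_cons_append_singleton_infix [DecidableEq α] {a : α} {l m : List α} (hl : a ∉ l)
    (h : a :: (m ++ [a]) <:+: a :: (l ++ [a])) : m = l := by
  obtain ⟨p, q, h⟩ := h
  have hc := congrArg (count a) h
  simp only [count_append, count_cons_self, count_nil, count_eq_zero.2 hl] at hc
  have hm : a ∉ m := count_eq_zero.1 (by omega)
  cases p with
  | cons c p =>
    simp only [cons_append, cons.injEq] at h
    have := count_pos_iff.2 (h.1 ▸ mem_cons_self : a ∈ c :: p)
    omega
  | nil =>
    simp only [nil_append, cons_append, cons.injEq, append_assoc] at h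
    exact ((append_cons_eq_append_cons_iff hm hl).1 h.2).1

theorem length_le_one_of_infix_of_isChain {R : α → α → Prop} {l v : List α} (hl : l.IsChain R)
    (hv : v <:+: l) (hR : ∀ a ∈ v, ∀ b ∈ v, ¬ R a b) : v.length ≤ 1 := by
  match v, hv, hR with
  | [], _, _ | [_], _, _ => simp
  | a :: b :: _, hv, hR =>
    exact absurd (isChain_cons_cons.1 (hl.infix hv)).1 (hR a (by simp) b (by simp))

theorem length_flatMap_le {g : α → List α} {l : List α} (hg : ∀ a ∈ l, (g a).length ≤ 1) :
    (l.flatMap g).length ≤ l.length := by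
  have := sum_le_card_nsmul (l.map fun a => (g a).length) 1 (by simpa using hg)
  simpa [length_flatMap] using this

theorem eq_singleton_of_flatMap_eq_self {g : α → List α} :
    ∀ {l : List α}, l.flatMap g = l → (∀ a ∈ l, (g a).length ≤ 1) → ∀ a ∈ l, g a = [a]
  | [], _, _ => by simp
  | a :: l, h, hg => by
    have hl := length_flatMap_le fun b hb => hg b (mem_cons_of_mem a hb)
    rw [flatMap_cons] at h
    obtain ⟨b, hb⟩ : ∃ b, g a = [b] := by
      match hga : g a, hg a mem_cons_self with
      | [], _ => rw [hga, nil_append] at h; simp [h] at hl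
      | [b], _ => exact ⟨b, rfl⟩
    rw [hb, singleton_append, cons.injEq] at h
    rintro c (_ | ⟨_, hc⟩)
    · rw [hb, h.1]
    · exact eq_singleton_of_flatMap_eq_self h.2 (fun b hb => hg b (mem_cons_of_mem a hb)) c hc

variable {R : ℕ → ℕ → Prop} {f g : α → ℕ}

theorem isChain_flatMap_pair (hfg : ∀ i, R (f i) (g i)) (hgf : ∀ i j, R (g i) (f j)) :
    ∀ l : List α, (l.flatMap fun i => [f i, g i]).IsChain R
  | [] => .nil
  | [i] => by simpa using hfg i
  | i :: j :: l => by
    have ih := isChain_flatMap_pair hfg hgf (j :: l)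
    rw [flatMap_cons] at ih ⊢
    exact .cons_cons (hfg i) (.cons_cons (hgf i j) ih)

theorem exists_of_mem_head?_flatMap_pair {l : List α} {a : ℕ}
    (h : a ∈ (l.flatMap fun i => [f i, g i]).head?) : ∃ i, a = f i := by
  cases l with
  | nil => simp at h
  | cons i l => exact ⟨i, by simpa [eq_comm] using h⟩

theorem exists_of_mem_getLast?_flatMap_pair {l : List α} {a : ℕ}
    (h : a ∈ (l.flatMap fun i => [f i, g i]).getLast?) : ∃ i, a = g i := by
  rcases eq_nil_or_concat' l with rfl | ⟨l, i, rfl⟩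
  · simp at h
  · exact ⟨i, by simpa [eq_comm] using h⟩

theorem nodup_flatMap_pair {l : List α} (hl : l.Nodup) (hf : Function.Injective f)
    (hg : Function.Injective g) (hfg : ∀ i j, f i ≠ g j) :
    (l.flatMap fun i => [f i, g i]).Nodup := by
  refine nodup_flatMap.2 ⟨fun i _ => by simp [hfg i i], hl.imp fun hij a ha hb => ?_⟩
  simp only [mem_cons, not_mem_nil, or_false] at ha hb
  rcases ha with rfl | rfl <;> rcases hb with h | h
  exacts [hij (hf h), hfg _ _ h, hfg _ _ h.symm, hij (hg h)]

end List

theorem FreeMonoid.toList_hom_eq_flatMap {α β : Type*} (σ : FreeMonoid α →* FreeMonoid β)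
    (w : FreeMonoid α) : (σ w).toList = w.toList.flatMap fun a => (σ (of a)).toList := by
  conv_lhs => rw [← lift_restrict σ, lift_apply]
  simp [toList_prod, List.flatMap_def, Function.comp_def]

open List

/-- The shape of `w_n[ξ,η] = A x B x C`, read through the parity of letters: even letters play
the role of `x` and of the `z_i`, odd letters that of the `t_i`. -/
structure IsFrame (x : ℕ) (A B C : List ℕ) : Prop where
  even_x : x % 2 = 0
  x_notMem : x ∉ A ++ C
  nodup_append : (A ++ C).Nodup
  nodup_B : B.Nodup
  mem_B : ∀ a, a ∈ B ↔ a ∈ A ++ C ∧ a % 2 = 0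
  isChain_left : (A ++ [x]).IsChain (· % 2 ≠ · % 2)
  isChain_right : (x :: C).IsChain (· % 2 ≠ · % 2)
  head_even : ∀ a ∈ A.head?, a % 2 = 0
  getLast_even : ∀ a ∈ C.getLast?, a % 2 = 0

def frameWord (x : ℕ) (A B C : List ℕ) : List ℕ := A ++ x :: (B ++ x :: C)

namespace IsFrame

variable {x : ℕ} {A B C : List ℕ}

theorem x_notMem_B (F : IsFrame x A B C) : x ∉ B := fun h => F.x_notMem ((F.mem_B x).1 h).1

theorem count_x (F : IsFrame x A B C) : (frameWord x A B C).count x = 2 := by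
  have hA : x ∉ A := fun h => F.x_notMem (mem_append_left C h)
  have hC : x ∉ C := fun h => F.x_notMem (mem_append_right A h)
  simp [frameWord, count_eq_zero.2 hA, count_eq_zero.2 hC, count_eq_zero.2 F.x_notMem_B]

theorem even_of_two_le_count (F : IsFrame x A B C) {a : ℕ}
    (h : 2 ≤ (frameWord x A B C).count a) : a % 2 = 0 := by
  by_contra ha
  have hax : x ≠ a := by have := F.even_x; omega
  have haB : a ∉ B := fun h => ha ((F.mem_B a).1 h).2
  have hAC := nodup_iff_count_le_one.1 F.nodup_append a
  simp only [frameWord, count_append, count_cons, beq_iff_eq, hax, if_false,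
    count_eq_zero.2 haB] at h hAC
  omega

theorem infix_middle_of_even (F : IsFrame x A B C) {v : List ℕ}
    (hv : v <:+: frameWord x A B C) (heven : ∀ a ∈ v, a % 2 = 0) (hlen : 2 ≤ v.length) :
    v <:+: x :: (B ++ [x]) := by
  have hshort : ∀ {l : List ℕ}, l.IsChain (· % 2 ≠ · % 2) → ¬ v <:+: l := fun hl hvl =>
    absurd (length_le_one_of_infix_of_isChain hl hvl fun a ha b hb => by
      simp [heven a ha, heven b hb]) (by omega)
  have hx := F.even_x
  rw [show frameWord x A B C = A ++ (x :: (B ++ [x]) ++ C) by simp [frameWord],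
    infix_append_iff_ne_nil] at hv
  rcases hv with hA | hMC | ⟨s, p, hs, -, rfl, ⟨r, rfl⟩, -⟩
  · exact absurd (infix_append_of_infix_left hA) (hshort F.isChain_left)
  · rcases infix_append_iff_ne_nil.1 hMC with hM | hC | ⟨s, p, -, hp, rfl, -, ⟨r, rfl⟩⟩
    · exact hM
    · exact absurd (infix_cons hC) (hshort F.isChain_right)
    · obtain ⟨c, p, rfl⟩ := exists_cons_of_ne_nil hp
      have := (isChain_cons_cons.1 F.isChain_right).1
      have := heven c (by simp)
      omega
  · obtain ⟨s, a, rfl⟩ := (eq_nil_or_concat' s).resolve_left hs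
    have : [a, x].IsChain (· % 2 ≠ · % 2) := F.isChain_left.infix ⟨r ++ s, [], by simp⟩
    have := isChain_pair.1 this
    have := heven a (by simp)
    omega

theorem eq_singleton_and_eq_of_infix (F : IsFrame x A B C) {g m : List ℕ} (hg : g ≠ [])
    (hm : ∀ a ∈ m, a % 2 = 0) (h : g ++ m ++ g <:+: frameWord x A B C) : g = [x] ∧ m = B := by
  have hcount : ∀ a ∈ g, 2 ≤ (g ++ m ++ g).count a := fun a ha => by
    have := count_pos_iff.2 ha
    simp only [count_append]
    omega
  have heven : ∀ a ∈ g ++ m ++ g, a % 2 = 0 := by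
    intro a ha
    rcases mem_append.1 ha with ha | ha
    · rcases mem_append.1 ha with ha | ha
      · exact F.even_of_two_le_count ((hcount a ha).trans (h.count_le a))
      · exact hm a ha
    · exact F.even_of_two_le_count ((hcount a ha).trans (h.count_le a))
  have hlen : 1 ≤ g.length := length_pos_iff.2 hg
  have hmid := F.infix_middle_of_even h heven (by simp only [length_append]; omega)
  have hgx : g = replicate g.length x := eq_replicate_iff.2 ⟨rfl, fun a ha => by
    by_contra hax
    have := (hcount a ha).trans (hmid.count_le a)
    have := nodup_iff_count_le_one.1 F.nodup_B a
    simp only [count_cons, count_append, count_nil, beq_iff_eq, Ne.symm hax, if_false] at *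
    omega⟩
  have hcx := hmid.count_le x
  rw [hgx] at hcx
  simp only [count_append, count_replicate_self, count_cons_self, count_nil,
    count_eq_zero.2 F.x_notMem_B] at hcx
  obtain rfl : g = [x] := by rw [hgx, show g.length = 1 by omega, replicate_one]
  exact ⟨rfl, eq_of_cons_append_singleton_infix F.x_notMem_B (by simpa using hmid)⟩

theorem not_append_self_infix (F : IsFrame x A B C) (hB : B ≠ []) {g : List ℕ} (hg : g ≠ []) :
    ¬ g ++ g <:+: frameWord x A B C := fun h =>
  hB (F.eq_singleton_and_eq_of_infix (m := []) hg (by simp) (by simpa using h)).2.symm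

theorem exists_of_frameWord_infix (F : IsFrame x A B C) {A' C' : List ℕ}
    (h : frameWord x A' B C' <:+: frameWord x A B C) : ∃ p q, p ++ A' = A ∧ C' ++ q = C := by
  obtain ⟨p, q, h⟩ := h
  have hc := congrArg (count x) h
  rw [F.count_x] at hc
  simp only [frameWord, count_append, count_cons_self, count_eq_zero.2 F.x_notMem_B] at hc
  have hpA : x ∉ p ++ A' := count_eq_zero.1 (by simp only [count_append]; omega)
  have hA : x ∉ A := fun h => F.x_notMem (mem_append_left C h)
  rw [show p ++ frameWord x A' B C' ++ q = (p ++ A') ++ x :: (B ++ x :: (C' ++ q)) by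
    simp [frameWord], frameWord, append_cons_eq_append_cons_iff hpA hA] at h
  exact ⟨p, q, h.1, by simpa using h.2⟩

theorem eq_of_append_eq_of_even_mem (F : IsFrame x A B C) {p q A' C' : List ℕ}
    (hA : p ++ A' = A) (hC : C' ++ q = C) (heven : ∀ a ∈ A ++ C, a % 2 = 0 → a ∈ A' ++ C') :
    A' = A ∧ C' = C := by
  have hodd : ∀ a ∈ p ++ q, a % 2 = 1 := by
    intro a ha
    by_contra hae
    have hmem := heven a (by rw [← hA, ← hC]; simp only [mem_append] at ha ⊢; tauto) (by omega)
    have h1 := nodup_iff_count_le_one.1 F.nodup_append a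
    rw [← hA, ← hC] at h1
    have := count_pos_iff.2 ha
    have := count_pos_iff.2 hmem
    simp only [count_append] at *
    omega
  constructor
  · cases p with
    | nil => simpa using hA
    | cons c p =>
      have := F.head_even c (by simp [← hA])
      have := hodd c (by simp)
      omega
  · rcases eq_nil_or_concat' q with rfl | ⟨q, c, rfl⟩
    · simpa using hC
    · have := F.getLast_even c (by simp [← hC])
      have := hodd c (by simp)
      omega

variable {B' : List ℕ} {g : ℕ → List ℕ}

theorem mod_two_eq_of_mem_flatMap (F : IsFrame x A B C) (hB' : ∀ a, a ∈ B' ↔ a ∈ B)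
    (hA : A.flatMap g = A) (hC : C.flatMap g = C) (hgB' : B'.flatMap g = B) :
    ∀ a ∈ A ++ C, ∀ b ∈ g a, b % 2 = a % 2 := by
  intro a ha b hb
  have hbAC : b ∈ A ++ C := by
    rw [← hA, ← hC, ← flatMap_append]
    exact mem_flatMap_of_mem ha hb
  rcases Nat.mod_two_eq_zero_or_one a with h0 | h1
  · have : b ∈ B'.flatMap g := mem_flatMap_of_mem ((hB' a).2 ((F.mem_B a).2 ⟨ha, h0⟩)) hb
    rw [hgB', F.mem_B] at this
    omega
  · -- an even `b` would also lie in the image of an even letter `c ≠ a`, but the images of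
    -- the letters of `A ++ C` are disjoint, as `(A ++ C).flatMap g = A ++ C` has no duplicates
    by_contra hb1
    have : b ∈ B'.flatMap g := hgB' ▸ (F.mem_B b).2 ⟨hbAC, by omega⟩
    obtain ⟨c, hc, hbc⟩ := mem_flatMap.1 this
    obtain ⟨hcAC, hc0⟩ := (F.mem_B c).1 ((hB' c).1 hc)
    have hnodup : ((A ++ C).flatMap g).Nodup := by
      rw [flatMap_append, hA, hC]
      exact F.nodup_append
    have : Std.Symm (Function.onFun Disjoint g) := ⟨fun _ _ h => h.symm⟩
    exact (nodup_flatMap.1 hnodup).2.forall ha hcAC (by rintro rfl; omega) hb hbc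

theorem eq_singleton_of_flatMap_eq (F : IsFrame x A B C) (hB' : ∀ a, a ∈ B' ↔ a ∈ B)
    (hA : A.flatMap g = A) (hC : C.flatMap g = C) (hgB' : B'.flatMap g = B) :
    ∀ a ∈ A ++ C, g a = [a] := by
  have hpar := F.mod_two_eq_of_mem_flatMap hB' hA hC hgB'
  have hfix : ∀ {l : List ℕ}, l.IsChain (· % 2 ≠ · % 2) → l.flatMap g = l → l ⊆ A ++ C →
      ∀ a ∈ l, g a = [a] := fun hl hgl hlAC =>
    eq_singleton_of_flatMap_eq_self hgl fun a ha =>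
      length_le_one_of_infix_of_isChain hl (hgl ▸ infix_flatMap_of_mem ha g) fun b hb c hc => by
        simp [hpar a (hlAC ha) b hb, hpar a (hlAC ha) c hc]
  intro a ha
  rcases mem_append.1 ha with ha | ha
  · exact hfix F.isChain_left.left_of_append hA (subset_append_left A C) a ha
  · exact hfix (l := C) F.isChain_right.tail hC (subset_append_right A C) a ha

theorem eq_of_flatMap_infix (F : IsFrame x A B C) (hB' : ∀ a, a ∈ B' ↔ a ∈ B) (hg : g x ≠ [])
    (h : (frameWord x A B' C).flatMap g <:+: frameWord x A B C) : B' = B := by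
  have hB'AC : ∀ c ∈ B', c ∈ A ++ C := fun c hc => ((F.mem_B c).1 ((hB' c).1 hc)).1
  have hsplit : (frameWord x A B' C).flatMap g =
      A.flatMap g ++ (g x ++ B'.flatMap g ++ g x) ++ C.flatMap g := by
    simp [frameWord]
  have hevenB' : ∀ b ∈ B'.flatMap g, b % 2 = 0 := by
    intro b hb
    obtain ⟨c, hc, hbc⟩ := mem_flatMap.1 hb
    have hbAC : b ∈ A.flatMap g ++ C.flatMap g :=
      flatMap_append ▸ mem_flatMap_of_mem (hB'AC c hc) hbc
    refine F.even_of_two_le_count (le_trans ?_ (h.count_le b))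
    have := count_pos_iff.2 hb
    have := count_pos_iff.2 hbAC
    rw [hsplit]
    simp only [count_append] at *
    omega
  obtain ⟨hgx, hgB'⟩ := F.eq_singleton_and_eq_of_infix hg hevenB'
    ((infix_append _ _ _).trans (hsplit ▸ h))
  obtain ⟨p, q, hp, hq⟩ := F.exists_of_frameWord_infix (A' := A.flatMap g) (C' := C.flatMap g)
    (by simpa [frameWord, hgx, hgB'] using h)
  obtain ⟨hA, hC⟩ := F.eq_of_append_eq_of_even_mem hp hq fun a ha hae => by
    have : a ∈ B'.flatMap g := hgB' ▸ (F.mem_B a).2 ⟨ha, hae⟩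
    obtain ⟨c, hc, hac⟩ := mem_flatMap.1 this
    exact flatMap_append ▸ mem_flatMap_of_mem (hB'AC c hc) hac
  have hfix := F.eq_singleton_of_flatMap_eq hB' hA hC hgB'
  calc B' = B'.flatMap g := by
        rw [flatMap_congr fun c hc => hfix c (hB'AC c hc), flatMap_singleton']
    _ = B := hgB'

end IsFrame

def blockA (n : ℕ) : List ℕ := (range n).flatMap fun i => [10 + 2 * i, 11 + 2 * i]

def blockB (n : ℕ) (π τ : Equiv.Perm (Fin n)) : List ℕ :=
  (finRange n).flatMap fun i => [10 + 2 * (π i : ℕ), 10 + 2 * (n + τ i)]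

def blockC (n : ℕ) : List ℕ := (range n).flatMap fun i => [11 + 2 * (n + i), 10 + 2 * (n + i)]

theorem mem_blockA {n a : ℕ} : a ∈ blockA n ↔ 10 ≤ a ∧ a < 10 + 2 * n := by
  simp only [blockA, mem_flatMap, mem_range, mem_cons, not_mem_nil, or_false]
  exact ⟨fun ⟨i, hi, h⟩ => by omega, fun h => ⟨(a - 10) / 2, by omega, by omega⟩⟩

theorem mem_blockC {n a : ℕ} : a ∈ blockC n ↔ 10 + 2 * n ≤ a ∧ a < 10 + 4 * n := by
  simp only [blockC, mem_flatMap, mem_range, mem_cons, not_mem_nil, or_false]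
  exact ⟨fun ⟨i, hi, h⟩ => by omega, fun h => ⟨(a - 10 - 2 * n) / 2, by omega, by omega⟩⟩

theorem mem_blockB {n a : ℕ} {π τ : Equiv.Perm (Fin n)} :
    a ∈ blockB n π τ ↔ 10 ≤ a ∧ a < 10 + 4 * n ∧ a % 2 = 0 := by
  simp only [blockB, mem_flatMap, mem_finRange, true_and, mem_cons, not_mem_nil, or_false]
  constructor
  · rintro ⟨i, h | h⟩ <;> omega
  · intro h
    by_cases hk : (a - 10) / 2 < n
    · exact ⟨π.symm ⟨_, hk⟩, Or.inl (by simp; omega)⟩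
    · exact ⟨τ.symm ⟨(a - 10) / 2 - n, by omega⟩, Or.inr (by simp; omega)⟩

theorem isFrame_blocks (n : ℕ) (π τ : Equiv.Perm (Fin n)) :
    IsFrame 0 (blockA n) (blockB n π τ) (blockC n) where
  even_x := rfl
  x_notMem h := by rcases mem_append.1 h with h | h <;> simp [mem_blockA, mem_blockC] at h
  nodup_append := by
    refine nodup_append.2 ⟨?_, ?_, fun a ha b hb => ?_⟩
    · exact nodup_flatMap_pair nodup_range (fun i j h => by omega) (fun i j h => by omega)
        fun i j => by omega
    · exact nodup_flatMap_pair nodup_range (fun i j h => by omega) (fun i j h => by omega)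
        fun i j => by omega
    · rw [mem_blockA] at ha
      rw [mem_blockC] at hb
      omega
  nodup_B := nodup_flatMap_pair (nodup_finRange n)
    (fun i j h => π.injective (Fin.ext (by simpa using h)))
    (fun i j h => τ.injective (Fin.ext (by simpa using h)))
    fun i j => by have := (π i).isLt; omega
  mem_B a := by simp only [mem_append, mem_blockA, mem_blockB, mem_blockC]; omega
  isChain_left := isChain_append.2
    ⟨isChain_flatMap_pair (fun _ => by omega) (fun _ _ => by omega) _, isChain_singleton _,
      fun a ha b hb => by
        obtain ⟨i, rfl⟩ := exists_of_mem_getLast?_flatMap_pair ha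
        simp at hb
        omega⟩
  isChain_right := isChain_cons.2
    ⟨fun a ha => by
        obtain ⟨i, rfl⟩ := exists_of_mem_head?_flatMap_pair ha
        omega,
      isChain_flatMap_pair (fun _ => by omega) (fun _ _ => by omega) _⟩
  head_even a ha := by
    obtain ⟨i, rfl⟩ := exists_of_mem_head?_flatMap_pair ha
    omega
  getLast_even a ha := by
    obtain ⟨i, rfl⟩ := exists_of_mem_getLast?_flatMap_pair ha
    omega

theorem toList_wWord (n : ℕ) (π τ : Equiv.Perm (Fin n)) :
    (wWord n π τ).toList = frameWord 0 (blockA n) (blockB n π τ) (blockC n) := by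
  simp [wWord, frameWord, prodRange, prodFin, FreeMonoid.toList_prod, flatMap_def, blockA, blockB,
    blockC, xL, zV, tV, Function.comp_def]

theorem toList_wWord' (n : ℕ) (π τ : Equiv.Perm (Fin n)) :
    (wWord' n π τ).toList = blockA n ++ 0 :: 0 :: (blockB n π τ ++ blockC n) := by
  simp [wWord', prodRange, prodFin, FreeMonoid.toList_prod, flatMap_def, blockA, blockB,
    blockC, xL, zV, tV, Function.comp_def]

theorem isFactor_iff_infix {u w : FM} :
    IsFactor u w ↔ FreeMonoid.toList u <:+: FreeMonoid.toList w :=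
  ⟨fun ⟨p, q, h⟩ => ⟨p.toList, q.toList, by simp [← h]⟩,
    fun ⟨s, t, h⟩ => ⟨.ofList s, .ofList t, FreeMonoid.toList.injective (by simpa using h)⟩⟩

theorem mSatisfies_sMon_of_forall {w u v : FM}
    (h : ∀ σ : FM →* FM, σ u = σ v ∨ (¬ IsFactor (σ u) w ∧ ¬ IsFactor (σ v) w)) :
    MSatisfies (SMon w) (u, v) := by
  intro φ
  choose f hf using fun a : ℕ => Con.mk'_surjective (c := reesCon w) (φ (.of a))
  have hφ : φ = (reesCon w).mk'.comp (FreeMonoid.lift f) :=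
    FreeMonoid.hom_eq fun a => by simpa using (hf a).symm
  rw [hφ]
  exact (Con.eq _).2 (h _)

/-- **Lemma (Section 3.3).** If `w_n[π,τ] ≠ w_n[ξ,η]`, then the monoid
`S(w_n[ξ,η])` satisfies the identity `w_n[π,τ] ≈ w_n'[π,τ]`. -/
theorem SW_satisfies_w_identity (n : ℕ) (hn : 1 ≤ n)
    (π τ ξ η : Equiv.Perm (Fin n))
    (hne : wWord n π τ ≠ wWord n ξ η) :
    MSatisfies (SMon (wWord n ξ η)) (wWord n π τ, wWord' n π τ) := by
  refine mSatisfies_sMon_of_forall fun σ => ?_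
  simp only [isFactor_iff_infix, ← FreeMonoid.toList.injective.eq_iff]
  rw [FreeMonoid.toList_hom_eq_flatMap σ (wWord n π τ),
    FreeMonoid.toList_hom_eq_flatMap σ (wWord' n π τ), toList_wWord, toList_wWord, toList_wWord']
  set g : ℕ → List ℕ := fun a => (σ (.of a)).toList
  by_cases hg : g 0 = []
  · exact Or.inl (by simp [frameWord, hg])
  have F := isFrame_blocks n ξ η
  refine Or.inr ⟨fun h => hne ?_, fun h => F.not_append_self_infix ?_ hg (IsInfix.trans ?_ h)⟩
  · have hB : ∀ a, a ∈ blockB n π τ ↔ a ∈ blockB n ξ η := fun a => by simp only [mem_blockB]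
    apply FreeMonoid.toList.injective
    rw [toList_wWord, toList_wWord, F.eq_of_flatMap_infix hB hg h]
  · exact ne_nil_of_mem (a := 10) (mem_blockB.2 (by omega))
  · simpa using infix_append' (flatMap g (blockA n)) (g 0 ++ g 0) _
end

section
/- Lemma (Section 3.3, last lemma): The identities σ3: xsxyty ≈ xsyxty and x²y ≈ yx² imply the identity w_n[π,τ] ≈ w_n'[π,τ] for every n ≥ 1 and all permutations π, τ of {1,…,n}; that is, every monoid satisfying xsxyty ≈ xsyxty and x²y ≈ yx² satisfies w_n[π,τ] ≈ w_n'[π,τ] for all such n, π, τ. -/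
/-! Under σ3, an adjacent pair `a c` inside a product may be swapped as soon as one of the two
factors occurs somewhere to its left and the other somewhere to its right.  In `w_n`, every
`z_{π(i)}` occurs in the prefix and every `z_{n+τ(i)}` in the suffix, so the middle block can be
sorted into `(∏ z_{π(i)}) (∏ z_{n+τ(i)})`; then the two `x`'s, each witnessed by the other, can
walk towards each other into the gap, and `x²y ≈ yx²` moves the resulting `x²` to the front. -/

section MulFactor

variable {M : Type*} [Monoid M]

def IsMulFactor (a b : M) : Prop := ∃ p q : M, b = p * a * q

namespace IsMulFactor

lemma refl (a : M) : IsMulFactor a a := ⟨1, 1, by simp⟩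

lemma trans {a b c : M} (hab : IsMulFactor a b) (hbc : IsMulFactor b c) : IsMulFactor a c := by
  obtain ⟨p, q, rfl⟩ := hab
  obtain ⟨p', q', rfl⟩ := hbc
  exact ⟨p' * p, q * q', by simp only [mul_assoc]⟩

lemma mul_left {a b : M} (h : IsMulFactor a b) (c : M) : IsMulFactor a (c * b) := by
  obtain ⟨p, q, rfl⟩ := h
  exact ⟨c * p, q, by simp only [mul_assoc]⟩

lemma mul_right {a b : M} (h : IsMulFactor a b) (c : M) : IsMulFactor a (b * c) := by
  obtain ⟨p, q, rfl⟩ := h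
  exact ⟨p, q * c, by simp only [mul_assoc]⟩

lemma of_mem_prod {a : M} {l : List M} (h : a ∈ l) : IsMulFactor a l.prod := by
  obtain ⟨s, t, rfl⟩ := List.append_of_mem h
  exact ⟨s.prod, t.prod, by simp [mul_assoc]⟩

lemma map {N : Type*} [Monoid N] (φ : M →* N) {a b : M} (h : IsMulFactor a b) :
    IsMulFactor (φ a) (φ b) := by
  obtain ⟨p, q, rfl⟩ := h
  exact ⟨φ p, φ q, by simp only [map_mul]⟩

end IsMulFactor

end MulFactor

lemma isMulFactor_prodRange (f : ℕ → FM) {k n : ℕ} (hk : k < n) :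
    IsMulFactor (f k) (prodRange n f) :=
  IsMulFactor.of_mem_prod (List.mem_map_of_mem (List.mem_range.2 hk))

lemma map_prodFin {M : Type*} [Monoid M] (φ : FM →* M) (n : ℕ) (f : Fin n → FM) :
    φ (prodFin n f) = ((List.finRange n).map fun i => φ (f i)).prod := by
  rw [prodFin, map_list_prod, List.map_map]
  rfl

namespace MSatisfies

variable {M : Type*} [Monoid M]

lemma sq_commute (h : MSatisfies M (xL ^ 2 * yL, yL * xL ^ 2)) (a b : M) :
    Commute (a * a) b := by
  change a * a * b = b * (a * a)
  simpa [xL, yL, pow_two, mul_assoc] using h (FreeMonoid.lift fun k => if k = 0 then a else b)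

lemma sigma3_swap (h : MSatisfies M idσ3) {a c L R : M} (ha : IsMulFactor a L)
    (hc : IsMulFactor c R) : L * (a * c) * R = L * (c * a) * R := by
  obtain ⟨p, q, rfl⟩ := ha
  obtain ⟨r, s, rfl⟩ := hc
  have hσ := h (FreeMonoid.lift fun k =>
    if k = 0 then a else if k = 1 then c else if k = 3 then q else r)
  simp only [idσ3, xL, sL, yL, tL, map_mul, FreeMonoid.lift_eval_of, ↓reduceIte,
    OfNat.ofNat_ne_zero, OfNat.ofNat_ne_one, one_ne_zero, Nat.succ_ne_self] at hσ
  simpa only [mul_assoc] using congrArg (p * · * s) hσ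

lemma sigma3_prod_mul_swap (h : MSatisfies M idσ3) {c R : M} (hc : IsMulFactor c R) :
    ∀ (ws : List M) (L : M), (∀ w ∈ ws, IsMulFactor w L) →
      L * (ws.prod * c) * R = L * (c * ws.prod) * R
  | [], _, _ => by simp
  | w :: ws, L, hws => by
    have hL : ∀ v ∈ ws, IsMulFactor v (L * w) := fun v hv =>
      (hws v (List.mem_cons_of_mem w hv)).mul_right w
    calc L * ((w :: ws).prod * c) * R = L * w * (ws.prod * c) * R := by simp [mul_assoc]
      _ = L * w * (c * ws.prod) * R := sigma3_prod_mul_swap h hc ws (L * w) hL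
      _ = L * (w * c) * (ws.prod * R) := by simp only [mul_assoc]
      _ = L * (c * w) * (ws.prod * R) :=
        h.sigma3_swap (hws w List.mem_cons_self) (hc.mul_left _)
      _ = L * (c * (w :: ws).prod) * R := by simp [mul_assoc]

lemma sigma3_mul_prod_swap (h : MSatisfies M idσ3) {R : M} :
    ∀ (ws : List M) (c L : M), IsMulFactor c L → (∀ w ∈ ws, IsMulFactor w R) →
      L * (c * ws.prod) * R = L * (ws.prod * c) * R
  | [], _, _, _, _ => by simp
  | w :: ws, c, L, hc, hws => by
    calc L * (c * (w :: ws).prod) * R = L * (c * w) * (ws.prod * R) := by simp [mul_assoc]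
      _ = L * (w * c) * (ws.prod * R) :=
        h.sigma3_swap hc ((hws w List.mem_cons_self).mul_left _)
      _ = L * w * (c * ws.prod) * R := by simp only [mul_assoc]
      _ = L * w * (ws.prod * c) * R :=
        sigma3_mul_prod_swap h ws c (L * w) (hc.mul_right w)
          fun v hv => hws v (List.mem_cons_of_mem w hv)
      _ = L * ((w :: ws).prod * c) * R := by simp [mul_assoc]

lemma sigma3_prod_map_mul (h : MSatisfies M idσ3) {ι : Type*} (U V : ι → M) {R : M} :
    ∀ (l : List ι) (L : M), (∀ i ∈ l, IsMulFactor (U i) L) → (∀ i ∈ l, IsMulFactor (V i) R) →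
      L * (l.map fun i => U i * V i).prod * R = L * ((l.map U).prod * (l.map V).prod) * R
  | [], _, _, _ => by simp
  | i :: l, L, hU, hV => by
    have hUl : ∀ w ∈ l.map U, IsMulFactor w (L * U i) := by
      simp only [List.forall_mem_map]
      exact fun j hj => (hU j (List.mem_cons_of_mem i hj)).mul_right _
    calc L * ((i :: l).map fun i => U i * V i).prod * R
        = L * U i * V i * (l.map fun i => U i * V i).prod * R := by simp [mul_assoc]
      _ = L * U i * V i * ((l.map U).prod * (l.map V).prod) * R :=
        sigma3_prod_map_mul h U V l _
          (fun j hj => ((hU j (List.mem_cons_of_mem i hj)).mul_right _).mul_right _)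
          fun j hj => hV j (List.mem_cons_of_mem i hj)
      _ = L * U i * (V i * (l.map U).prod) * ((l.map V).prod * R) := by simp only [mul_assoc]
      _ = L * U i * ((l.map U).prod * V i) * ((l.map V).prod * R) :=
        (h.sigma3_prod_mul_swap ((hV i List.mem_cons_self).mul_left _) _ _ hUl).symm
      _ = L * (((i :: l).map U).prod * ((i :: l).map V).prod) * R := by simp [mul_assoc]

lemma w_eq_w'_of_isMulFactor (hσ3 : MSatisfies M idσ3)
    (hsq : MSatisfies M (xL ^ 2 * yL, yL * xL ^ 2)) {ι : Type*} (U V : ι → M) (l : List ι)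
    {A C X : M} (hU : ∀ i ∈ l, IsMulFactor (U i) A) (hV : ∀ i ∈ l, IsMulFactor (V i) C) :
    A * X * (l.map fun i => U i * V i).prod * X * C =
      A * (X * X) * (l.map fun i => U i * V i).prod * C := by
  set Us := (l.map U).prod
  set Vs := (l.map V).prod
  have hUs : ∀ w ∈ l.map U, IsMulFactor w A := by simpa only [List.forall_mem_map] using hU
  have hVs : ∀ w ∈ l.map V, IsMulFactor w C := by simpa only [List.forall_mem_map] using hV
  calc A * X * (l.map fun i => U i * V i).prod * X * C
      = A * X * (l.map fun i => U i * V i).prod * (X * C) := by simp only [mul_assoc]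
    _ = A * X * (Us * Vs) * (X * C) :=
      hσ3.sigma3_prod_map_mul U V l _ (fun i hi => (hU i hi).mul_right X)
        fun i hi => (hV i hi).mul_left X
    _ = A * (X * Us) * (Vs * X * C) := by simp only [mul_assoc]
    _ = A * (Us * X) * (Vs * X * C) :=
      (hσ3.sigma3_prod_mul_swap (((IsMulFactor.refl X).mul_left Vs).mul_right C) _ _ hUs).symm
    _ = A * Us * X * (Vs * X) * C := by simp only [mul_assoc]
    _ = A * Us * X * (X * Vs) * C :=
      (hσ3.sigma3_mul_prod_swap _ X _ ((IsMulFactor.refl X).mul_left _) hVs).symm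
    _ = A * (Us * (X * X)) * (Vs * C) := by simp only [mul_assoc]
    _ = A * ((X * X) * Us) * (Vs * C) := by rw [(hsq.sq_commute X Us).eq]
    _ = A * (X * X) * (Us * Vs) * C := by simp only [mul_assoc]
    _ = A * (X * X) * (l.map fun i => U i * V i).prod * C :=
      (hσ3.sigma3_prod_map_mul U V l _ (fun i hi => (hU i hi).mul_right _) hV).symm

end MSatisfies

/-- **Lemma (Section 3.3).** The identities `σ3 : xsxyty ≈ xsyxty` and
`x²y ≈ yx²` imply the identity `w_n[π,τ] ≈ w_n'[π,τ]` for all `n ≥ 1` and all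
permutations `π, τ`. -/
theorem sigma3_implies_w_identity (M : Type*) [Monoid M]
    (hσ3 : MSatisfies M idσ3) (hcomm : MSatisfies M (xL ^ 2 * yL, yL * xL ^ 2)) :
    ∀ n : ℕ, 1 ≤ n → ∀ π τ : Equiv.Perm (Fin n),
      MSatisfies M (wWord n π τ, wWord' n π τ) := by
  intro n _ π τ φ
  show φ (wWord n π τ) = φ (wWord' n π τ)
  simp only [wWord, wWord', map_mul, map_prodFin]
  exact hσ3.w_eq_w'_of_isMulFactor hcomm _ _ _
    (fun i _ => (((IsMulFactor.refl _).mul_right _).trans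
      (isMulFactor_prodRange (fun j => zV j * tV j) (π i).isLt)).map φ)
    (fun i _ => (((IsMulFactor.refl _).mul_left _).trans
      (isMulFactor_prodRange (fun j => tV (n + j) * zV (n + j)) (τ i).isLt)).map φ)
end

section
/- Lemma 4.1(i): For every n ≥ 2, the fully invariant congruences θ_{A_n} = θ({xy ≈ yx, x^n ≈ 1}) and θ_{SL} = θ({xy ≈ yx, x ≈ x²}) on F = FreeMonoid ℕ do not permute: θ_{A_n} ∘ θ_{SL} ≠ θ_{SL} ∘ θ_{A_n}. -/
/-- The equational theory of the variety `A_n` of abelian groups of exponent `n`. -/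
def θAb (n : ℕ) : Con FM := fiCon {(xL * yL, yL * xL), (xL ^ n, 1)}

/-! The pair `(1, x)` lies in `θ_{A_n} ∘ θ_{SL}`, via `1 ≈ xⁿ ≈ x`. It does not lie in
`θ_{SL} ∘ θ_{A_n}`: a word `θ_{SL}`-related to `1` is empty, as evaluation in the semilattice
`({0, 1}, ·)` shows, and `1 ≈ x` fails in the group `ℤ/n`. Both evaluations rest on soundness:
a monoid satisfying a set of identities satisfies the fully invariant congruence they generate. -/

section Soundness

variable {M : Type*} [Monoid M]

variable (M) in
def identCon : Con FM := ⨅ φ : FM →* M, Con.ker φ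

lemma identCon_iff {u v : FM} : identCon M u v ↔ MSatisfies M (u, v) := by
  simp only [identCon, Con.coe_iInf, iInf_apply, iInf_Prop_eq, Con.ker_rel]
  rfl

lemma isFullyInvariant_identCon : IsFullyInvariant (identCon M) := fun σ _ _ h =>
  identCon_iff.2 fun φ => identCon_iff.1 h (φ.comp σ)

lemma fiCon_rel_of_mem {E : Set (FM × FM)} {u v : FM} (h : (u, v) ∈ E) : fiCon E u v :=
  fun _ hc => hc.2 _ h

lemma fiCon_le {E : Set (FM × FM)} {c : Con FM} (hc : IsFullyInvariant c)
    (hE : ∀ p ∈ E, c p.1 p.2) : fiCon E ≤ c :=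
  sInf_le ⟨hc, hE⟩

lemma satisfiesAll_fiCon {E : Set (FM × FM)} (hE : ∀ p ∈ E, MSatisfies M p) :
    SatisfiesAll (fiCon E) M := fun _ _ h =>
  identCon_iff.1 <| fiCon_le isFullyInvariant_identCon (fun p hp => identCon_iff.2 (hE p hp)) h

lemma Con.rel_pow_succ_of_rel_sq (c : Con M) {a : M} (h : c a (a ^ 2)) (k : ℕ) :
    c a (a ^ (k + 1)) := by
  induction k with
  | zero => rw [zero_add, pow_one]; exact c.refl a
  | succ k ih =>
    rw [pow_succ]
    exact c.trans (sq a ▸ h) (c.mul ih (c.refl a))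

end Soundness

-- `(ZMod 2, *)` is the two-element semilattice monoid.
lemma satisfiesAll_θSL_zmod_two : SatisfiesAll θSL (ZMod 2) := by
  refine satisfiesAll_fiCon ?_
  rintro p (rfl | rfl) φ
  · simp only [map_pow]
    generalize φ xL = a
    fin_cases a <;> rfl
  · simp only [map_mul, mul_comm]

lemma satisfiesAll_θAb_multiplicative_zmod (n : ℕ) :
    SatisfiesAll (θAb n) (Multiplicative (ZMod n)) := by
  refine satisfiesAll_fiCon ?_
  rintro p (rfl | rfl) φ
  · simp only [map_mul, mul_comm]
  · simp only [map_pow, map_one]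
    apply Multiplicative.toAdd.injective
    simp

lemma eq_one_of_θSL_one {v : FM} (h : θSL 1 v) : v = 1 := by
  induction v using FreeMonoid.inductionOn' with
  | one => rfl
  | of_mul a w _ =>
    have := satisfiesAll_θSL_zmod_two _ _ h (FreeMonoid.lift fun _ => 0)
    simp at this

lemma not_θAb_one_xL {n : ℕ} (hn : n ≠ 1) : ¬ θAb n 1 xL := by
  have := ZMod.nontrivial_iff.2 hn
  intro h
  have := satisfiesAll_θAb_multiplicative_zmod n _ _ h (FreeMonoid.lift fun _ => .ofAdd 1)
  simpa [xL] using congrArg Multiplicative.toAdd this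

/-- **Lemma 4.1(i).** For `n ≥ 2`, the congruences `θ_{A_n}` and `θ_{SL}` do not
permute. -/
theorem theta_Abn_SL_not_permute (n : ℕ) (hn : 2 ≤ n) :
    Relation.Comp (⇑(θAb n)) (⇑θSL) ≠ Relation.Comp (⇑θSL) (⇑(θAb n)) := by
  intro h
  have hx_pow : θSL xL (xL ^ n) := by
    obtain ⟨k, rfl⟩ := Nat.exists_eq_add_of_le' (one_le_two.trans hn)
    exact θSL.rel_pow_succ_of_rel_sq (fiCon_rel_of_mem (Or.inl rfl)) k
  have hpow_one : θAb n (xL ^ n) 1 := fiCon_rel_of_mem (Or.inr rfl)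
  have h1x : Relation.Comp (⇑(θAb n)) (⇑θSL) 1 xL :=
    ⟨xL ^ n, (θAb n).symm hpow_one, θSL.symm hx_pow⟩
  obtain ⟨v, h1v, hvx⟩ := h ▸ h1x
  obtain rfl := eq_one_of_θSL_one h1v
  exact not_θAb_one_xL (by omega) hvx
end

section
/- Lemma 7.1: Let θ be a fully invariant congruence on F = FreeMonoid ℕ such that α∘β∘α = β∘α∘β for every two fully invariant congruences α, β on F containing θ (the corresponding monoid variety V is weakly fi-permutable). Then either (x, x^{n+1}) ∈ θ for some n ≥ 1 (V is completely regular) or (x^n, x^{n+1}) ∈ θ for some n ≥ 1 (V is aperiodic). -/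
/-! If the variety is neither completely regular nor aperiodic, then every one-letter identity
`x^i ≈ x^j` of `θ` with `i ≠ j` has `i, j ≥ 2`, and all differences `j - i` lie in a proper
subgroup of `ℤ`, hence are divisible by a prime `p`. So `θ` is contained in the theory `α` of the
cyclic group `ℤ/p` and in the theory `β` of the monoid `⟨c | c² = c³⟩`. Now
`1 α x^p β x^(p+1) α x`, but `1` and `x` are not related by `βαβ`: along `β` the number of
occurrences of `x` is preserved up to saturation at `2`, along `α` modulo `p`, and no such chain
leads from `0` to `1`. -/

def equationalTheory (M : Type*) [Monoid M] : Con FM where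
  r u v := MSatisfies M (u, v)
  iseqv := ⟨fun _ _ => rfl, fun h φ => (h φ).symm, fun h h' φ => (h φ).trans (h' φ)⟩
  mul' h₁ h₂ φ := by simp only [map_mul, h₁ φ, h₂ φ]

section EquationalTheory

variable {M : Type*} [Monoid M]

lemma isFullyInvariant_equationalTheory : IsFullyInvariant (equationalTheory M) :=
  fun σ _ _ h φ => h (φ.comp σ)

lemma equationalTheory_pow_pow {i j : ℕ} (h : ∀ z : M, z ^ i = z ^ j) :
    equationalTheory M (xL ^ i) (xL ^ j) := fun φ => by
  simp only [map_pow]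
  exact h _

lemma pow_occ_eq_of_equationalTheory {u v : FM} (h : equationalTheory M u v) (c : M) (a : ℕ) :
    c ^ occ u a = c ^ occ v a :=
  h ((powersHom M c).comp (FreeMonoid.count a))

lemma exists_lift_pow_eq_pow (e : ℕ → ℕ) (w : FM) :
    ∃ n, FreeMonoid.lift (fun a => xL ^ e a) w = xL ^ n := by
  induction w using FreeMonoid.inductionOn' with
  | one => exact ⟨0, by simp⟩
  | of_mul a w ih =>
    obtain ⟨n, hn⟩ := ih
    exact ⟨e a + n, by rw [map_mul, FreeMonoid.lift_eval_of, hn, pow_add]⟩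

/-- Every substitution into a monoid generated by `c` factors through a substitution into `⟨x⟩`. -/
lemma le_equationalTheory {θ : Con FM} (hθ : IsFullyInvariant θ) (c : M)
    (hc : ∀ z : M, ∃ k, c ^ k = z) (h : ∀ i j, θ (xL ^ i) (xL ^ j) → c ^ i = c ^ j) :
    θ ≤ equationalTheory M := by
  intro u v huv φ
  choose e he using fun a => hc (φ (FreeMonoid.of a))
  set σ : FM →* FM := FreeMonoid.lift fun a => xL ^ e a
  have hφ : φ = (FreeMonoid.lift fun _ => c).comp σ :=
    FreeMonoid.hom_eq fun a => by simp [σ, he, xL]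
  obtain ⟨i, hi⟩ := exists_lift_pow_eq_pow e u
  obtain ⟨j, hj⟩ := exists_lift_pow_eq_pow e v
  have hσ : θ (xL ^ i) (xL ^ j) := hi ▸ hj ▸ hθ σ u v huv
  simp only [hφ, MonoidHom.comp_apply, σ, hi, hj, map_pow]
  simpa [xL] using h i j hσ

end EquationalTheory

def powerDifferences (θ : Con FM) : AddSubgroup ℤ where
  carrier := {d | ∃ i j : ℕ, θ (xL ^ i) (xL ^ j) ∧ (j : ℤ) - i = d}
  add_mem' := by
    rintro _ _ ⟨i, j, h, rfl⟩ ⟨k, l, h', rfl⟩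
    refine ⟨i + k, j + l, ?_, by push_cast; ring⟩
    simpa only [pow_add] using θ.mul h h'
  zero_mem' := ⟨0, 0, θ.refl _, sub_self _⟩
  neg_mem' := by
    rintro _ ⟨i, j, h, rfl⟩
    exact ⟨j, i, θ.symm h, by ring⟩

lemma exists_prime_dvd_of_one_notMem (H : AddSubgroup ℤ) (h : (1 : ℤ) ∉ H) :
    ∃ p : ℕ, p.Prime ∧ ∀ d ∈ H, (p : ℤ) ∣ d := by
  obtain ⟨a, rfl⟩ := Int.subgroup_cyclic H
  rw [← AddSubgroup.zmultiples_eq_closure] at h ⊢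
  have ha : a.natAbs ≠ 1 := fun ha =>
    h (Int.mem_zmultiples_iff.2 (Int.isUnit_iff_natAbs_eq.2 ha).dvd)
  obtain ⟨p, hp, hpa⟩ := Nat.exists_prime_and_dvd ha
  exact ⟨p, hp, fun d hd => (Int.natCast_dvd.2 hpa).trans (Int.mem_zmultiples_iff.1 hd)⟩

lemma exists_pow_eq_pow_succ_of_one_mem_powerDifferences {θ : Con FM}
    (h : (1 : ℤ) ∈ powerDifferences θ) : ∃ n : ℕ, 1 ≤ n ∧ θ (xL ^ n) (xL ^ (n + 1)) := by
  obtain ⟨i, j, hij, hd⟩ := h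
  obtain rfl : j = i + 1 := by omega
  exact ⟨i + 1, by omega, by simpa only [pow_succ] using θ.mul hij (θ.refl xL)⟩

lemma exists_eq_pow_succ_of_pow_eq_pow {θ : Con FM} {i j : ℕ} (h : θ (xL ^ i) (xL ^ j))
    (hij : i ≠ j) (hi : i < 2) : ∃ n : ℕ, 1 ≤ n ∧ θ xL (xL ^ (n + 1)) := by
  have hx : ∃ k, k ≠ 1 ∧ θ xL (xL ^ k) := by
    interval_cases i
    · exact ⟨j + 1, by omega, by simpa [pow_succ] using θ.mul h (θ.refl xL)⟩
    · exact ⟨j, hij.symm, by simpa using h⟩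
  obtain ⟨k, hk, hxk⟩ := hx
  rcases Nat.lt_or_gt_of_ne hk with hk | hk
  · obtain rfl : k = 0 := by omega
    exact ⟨1, le_rfl, by simpa [sq] using θ.symm (θ.mul hxk (θ.refl xL))⟩
  · exact ⟨k - 1, by omega, by rwa [Nat.sub_add_cancel hk.le]⟩

lemma zmod_pow_card_eq_one {p : ℕ} (z : Multiplicative (ZMod p)) : z ^ p = 1 := by
  rw [← toAdd_eq_zero, toAdd_pow, nsmul_eq_mul, ZMod.natCast_self, zero_mul]

lemma le_equationalTheory_zmod {θ : Con FM} (hθ : IsFullyInvariant θ) (p : ℕ) [NeZero p]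
    (hp : ∀ d ∈ powerDifferences θ, (p : ℤ) ∣ d) :
    θ ≤ equationalTheory (Multiplicative (ZMod p)) := by
  refine le_equationalTheory hθ (Multiplicative.ofAdd 1) (fun z => ⟨z.toAdd.val, ?_⟩)
    fun i j h => ?_
  · rw [← ofAdd_nsmul, nsmul_one, ZMod.natCast_zmod_val]
    rfl
  · have hij := (ZMod.intCast_eq_intCast_iff_dvd_sub i j p).2 (hp _ ⟨i, j, h, rfl⟩)
    push_cast at hij
    rw [← ofAdd_nsmul, ← ofAdd_nsmul, nsmul_one, nsmul_one, hij]

lemma natCast_occ_eq_of_equationalTheory_zmod {p : ℕ} {u v : FM}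
    (h : equationalTheory (Multiplicative (ZMod p)) u v) (a : ℕ) :
    (occ u a : ZMod p) = occ v a := by
  simpa [← ofAdd_nsmul] using pow_occ_eq_of_equationalTheory h (Multiplicative.ofAdd 1) a

/-- `Submonoid.powers (2 : ZMod 4) = {1, 2, 0}` is the monoid `⟨c | c² = c³⟩`. -/
lemma two_pow_eq_two_pow_min (n : ℕ) : (2 : ZMod 4) ^ n = 2 ^ min n 2 := by
  rcases le_total n 2 with h | h
  · rw [min_eq_left h]
  · rw [min_eq_right h, ← Nat.sub_add_cancel h, pow_add, show (2 : ZMod 4) ^ 2 = 0 from rfl,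
      mul_zero]

lemma two_pow_eq_two_pow_iff (n k : ℕ) : (2 : ZMod 4) ^ n = 2 ^ k ↔ min n 2 = min k 2 := by
  refine ⟨fun h => ?_, fun h => by rw [two_pow_eq_two_pow_min n, h, ← two_pow_eq_two_pow_min]⟩
  rw [two_pow_eq_two_pow_min n, two_pow_eq_two_pow_min k] at h
  have hn := min_le_right n 2
  have hk := min_le_right k 2
  generalize min n 2 = a at *
  generalize min k 2 = b at *
  interval_cases a <;> interval_cases b <;> revert h <;> decide

lemma le_equationalTheory_powers_two {θ : Con FM} (hθ : IsFullyInvariant θ)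
    (hCR : ¬ ∃ n : ℕ, 1 ≤ n ∧ θ xL (xL ^ (n + 1))) :
    θ ≤ equationalTheory (Submonoid.powers (2 : ZMod 4)) := by
  refine le_equationalTheory hθ ⟨2, Submonoid.mem_powers 2⟩
    (fun ⟨_, k, hk⟩ => ⟨k, Subtype.ext hk⟩) fun i j h => Subtype.ext ?_
  rw [SubmonoidClass.coe_pow, SubmonoidClass.coe_pow, two_pow_eq_two_pow_iff]
  rcases eq_or_ne i j with rfl | hij
  · rfl
  have hi : 2 ≤ i := not_lt.1 fun hi => hCR (exists_eq_pow_succ_of_pow_eq_pow h hij hi)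
  have hj : 2 ≤ j :=
    not_lt.1 fun hj => hCR (exists_eq_pow_succ_of_pow_eq_pow (θ.symm h) hij.symm hj)
  rw [min_eq_right hi, min_eq_right hj]

lemma min_occ_eq_of_equationalTheory_powers_two {u v : FM}
    (h : equationalTheory (Submonoid.powers (2 : ZMod 4)) u v) (a : ℕ) :
    min (occ u a) 2 = min (occ v a) 2 := by
  have := congrArg Subtype.val (pow_occ_eq_of_equationalTheory h ⟨2, Submonoid.mem_powers 2⟩ a)
  rwa [SubmonoidClass.coe_pow, SubmonoidClass.coe_pow, two_pow_eq_two_pow_iff] at this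

lemma pow_eq_pow_succ_of_mem_powers_two {n : ℕ} (hn : 2 ≤ n)
    (z : Submonoid.powers (2 : ZMod 4)) : z ^ n = z ^ (n + 1) := by
  obtain ⟨_, k, rfl⟩ := z
  apply Subtype.ext
  rw [SubmonoidClass.coe_pow, SubmonoidClass.coe_pow, ← pow_mul, ← pow_mul,
    two_pow_eq_two_pow_iff]
  rcases k with _ | k
  · simp
  have h : 2 ≤ (k + 1) * n := hn.trans (Nat.le_mul_of_pos_left n k.succ_pos)
  rw [min_eq_right h, min_eq_right (h.trans (Nat.mul_le_mul_left _ n.le_succ))]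

/-- **Lemma 7.1.** If a monoid variety with theory `θ` is weakly fi-permutable,
then it is either completely regular or aperiodic. -/
theorem weakly_fi_permutable_cr_or_aperiodic (θ : Con FM) (hθ : IsFullyInvariant θ)
    (hweak : ∀ α β : Con FM, IsFullyInvariant α → IsFullyInvariant β →
        θ ≤ α → θ ≤ β →
        Relation.Comp (⇑α) (Relation.Comp (⇑β) (⇑α)) =
          Relation.Comp (⇑β) (Relation.Comp (⇑α) (⇑β))) :
    (∃ n : ℕ, 1 ≤ n ∧ θ xL (xL ^ (n + 1))) ∨
      (∃ n : ℕ, 1 ≤ n ∧ θ (xL ^ n) (xL ^ (n + 1))) := by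
  refine or_iff_not_imp_left.2 fun hCR => by_contra fun hAP => ?_
  obtain ⟨p, hp, hdvd⟩ := exists_prime_dvd_of_one_notMem (powerDifferences θ)
    fun h => hAP (exists_pow_eq_pow_succ_of_one_mem_powerDifferences h)
  have : NeZero p := ⟨hp.ne_zero⟩
  set α := equationalTheory (Multiplicative (ZMod p))
  set β := equationalTheory (Submonoid.powers (2 : ZMod 4))
  have hαβα : Relation.Comp α (Relation.Comp β α) 1 xL := by
    refine ⟨xL ^ p, ?_, xL ^ (p + 1), ?_, ?_⟩
    · simpa using equationalTheory_pow_pow (i := 0) fun z =>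
        (pow_zero z).trans (zmod_pow_card_eq_one z).symm
    · exact equationalTheory_pow_pow (pow_eq_pow_succ_of_mem_powers_two hp.two_le)
    · simpa using equationalTheory_pow_pow (j := 1) fun z => by
        rw [pow_succ, zmod_pow_card_eq_one, one_mul, pow_one]
  obtain ⟨a, h1a, b, hab, hbx⟩ := hweak α β isFullyInvariant_equationalTheory
    isFullyInvariant_equationalTheory (le_equationalTheory_zmod hθ p hdvd)
    (le_equationalTheory_powers_two hθ hCR) ▸ hαβα
  have hβa : min 0 2 = min (occ a 0) 2 := min_occ_eq_of_equationalTheory_powers_two h1a 0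
  have hβb : min (occ b 0) 2 = min 1 2 := min_occ_eq_of_equationalTheory_powers_two hbx 0
  obtain ⟨ha, hb⟩ : occ a 0 = 0 ∧ occ b 0 = 1 := by omega
  have hαab := natCast_occ_eq_of_equationalTheory_zmod hab 0
  rw [ha, hb, Nat.cast_zero, eq_comm, ZMod.natCast_eq_zero_iff] at hαab
  exact hp.ne_one (Nat.dvd_one.1 hαab)
end
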